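/- arXiv:1501.05170 — 8 statements merged into one kernel-verified Lean document; each statement's English description precedes it below -/
import Mathlib

section
/- Let A and B be groups, n ≥ 2, and let G_n = A(n)B be their n-th nilpotent product. Then the n-th term of the lower central series of A is contained in the centralizer of B in A, i.e. γ_n(A) ≤ C_A(B), and symmetrically γ_n(B) ≤ C_B(A), where A and B are regarded as subgroups of G_n. -/
open Monoid

section NilpotentProduct

variable (A B : Type*) [Group A] [Group B] (n : ℕ)

/-- The Cartesian subgroup `[A,B]` of the free product `A ∗ B`: the kernel of the
natural homomorphism `A ∗ B →* A × B`. -/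
def cartesianSubgroup : Subgroup (Coprod A B) := MonoidHom.ker (Coprod.toProd)

/-- The normal subgroup `[A,B] ∩ γ_{n+1}(A ∗ B)` defining the `n`-th nilpotent product.
(Here `lowerCentralSeries H n = γ_{n+1}(H)` since Mathlib's indexing starts at `0`.) -/
def nilProdKer : Subgroup (Coprod A B) :=
  cartesianSubgroup A B ⊓ (⊤ : Subgroup (Coprod A B)).lowerCentralSeries n

instance : (nilProdKer A B n).Normal := by
  have h1 : (cartesianSubgroup A B).Normal := MonoidHom.normal_ker _
  have h2 : ((⊤ : Subgroup (Coprod A B)).lowerCentralSeries n).Normal := inferInstance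
  exact Subgroup.normal_inf_normal _ _

/-- The `n`-th nilpotent product `A(n)B = (A ∗ B) / ([A,B] ∩ γ_{n+1}(A ∗ B))`. -/
abbrev NilProd := Coprod A B ⧸ nilProdKer A B n

/-- The canonical embedding of `A` into `A(n)B`. -/
def nilProdInl : A →* NilProd A B n := (QuotientGroup.mk' _).comp Coprod.inl

/-- The canonical embedding of `B` into `A(n)B`. -/
def nilProdInr : B →* NilProd A B n := (QuotientGroup.mk' _).comp Coprod.inr

/-- `C_A(B)`: the centralizer of `B` in `A`, as a subgroup of `A(n)B`. -/
def CAB : Subgroup (NilProd A B n) :=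
  (nilProdInl A B n).range ⊓ Subgroup.centralizer (Set.range (nilProdInr A B n))

/-- `C_B(A)`: the centralizer of `A` in `B`, as a subgroup of `A(n)B`. -/
def CBA : Subgroup (NilProd A B n) :=
  (nilProdInr A B n).range ⊓ Subgroup.centralizer (Set.range (nilProdInl A B n))

end NilpotentProduct

/-!
For `a ∈ γ_{n-1}(A)` and `b ∈ B`, the commutator `⁅a, b⁆` in `A ∗ B` lies in `γ_n(A ∗ B)` and maps
to `1` in `A × B`, so it lies in the kernel `[A,B] ∩ γ_n(A ∗ B)` and vanishes in `A(n)B`.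
-/

open scoped commutatorElement

namespace Subgroup

variable {G : Type*} [Group G]

theorem commutatorElement_mem_lowerCentralSeries {S : Subgroup G} {n : ℕ} {u v : G}
    (hu : u ∈ S.lowerCentralSeries (n - 1)) (hv : v ∈ S) :
    ⁅u, v⁆ ∈ S.lowerCentralSeries n := by
  have h : ⁅u, v⁆ ∈ S.lowerCentralSeries (n - 1 + 1) := by
    rw [lowerCentralSeries_succ]
    exact commutator_mem_commutator hu hv
  exact S.lowerCentralSeries_antitone (by omega) h

theorem map_mem_top_lowerCentralSeries {K : Type*} [Group K] (f : G →* K) {k : ℕ} {g : G}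
    (hg : g ∈ (⊤ : Subgroup G).lowerCentralSeries k) :
    f g ∈ (⊤ : Subgroup K).lowerCentralSeries k := by
  have h : f g ∈ ((⊤ : Subgroup G).map f).lowerCentralSeries k := by
    rw [← map_lowerCentralSeries]
    exact mem_map_of_mem f hg
  exact lowerCentralSeries_mono k le_top h

end Subgroup

section NilpotentProduct

variable {A B : Type*} [Group A] [Group B] {n : ℕ}

theorem commutatorElement_mem_cartesianSubgroup_iff {u v : Coprod A B} :
    ⁅u, v⁆ ∈ cartesianSubgroup A B ↔ Commute (Coprod.toProd u) (Coprod.toProd v) := by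
  rw [cartesianSubgroup, MonoidHom.mem_ker, map_commutatorElement,
    commutatorElement_eq_one_iff_commute]

theorem commute_mk_of_mem_lowerCentralSeries {u v : Coprod A B}
    (hu : u ∈ (⊤ : Subgroup (Coprod A B)).lowerCentralSeries (n - 1))
    (huv : Commute (Coprod.toProd u) (Coprod.toProd v)) :
    Commute (QuotientGroup.mk' (nilProdKer A B n) u) (QuotientGroup.mk' _ v) := by
  rw [← commutatorElement_eq_one_iff_commute, ← map_commutatorElement, QuotientGroup.mk'_apply,
    QuotientGroup.eq_one_iff]
  exact ⟨commutatorElement_mem_cartesianSubgroup_iff.mpr huv,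
    Subgroup.commutatorElement_mem_lowerCentralSeries hu (Subgroup.mem_top v)⟩

theorem commute_nilProdInl_nilProdInr_of_mem_left {a : A}
    (ha : a ∈ (⊤ : Subgroup A).lowerCentralSeries (n - 1)) (b : B) :
    Commute (nilProdInl A B n a) (nilProdInr A B n b) :=
  commute_mk_of_mem_lowerCentralSeries
    (Subgroup.map_mem_top_lowerCentralSeries (Coprod.inl (N := B)) ha)
    (MonoidHom.commute_inl_inr a b)

theorem commute_nilProdInl_nilProdInr_of_mem_right (a : A) {b : B}
    (hb : b ∈ (⊤ : Subgroup B).lowerCentralSeries (n - 1)) :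
    Commute (nilProdInl A B n a) (nilProdInr A B n b) :=
  (commute_mk_of_mem_lowerCentralSeries (v := Coprod.inl a)
    (Subgroup.map_mem_top_lowerCentralSeries (Coprod.inr (M := A)) hb)
    (MonoidHom.commute_inl_inr a b).symm).symm

end NilpotentProduct

theorem gamma_le_centralizer_general (A B : Type*) [Group A] [Group B] (n : ℕ) :
    (((⊤ : Subgroup A).lowerCentralSeries (n - 1)).map (nilProdInl A B n) ≤ CAB A B n) ∧
    (((⊤ : Subgroup B).lowerCentralSeries (n - 1)).map (nilProdInr A B n) ≤ CBA A B n) := by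
  constructor
  · rintro _ ⟨a, ha, rfl⟩
    refine ⟨⟨a, rfl⟩, Subgroup.mem_centralizer_iff.mpr ?_⟩
    rintro _ ⟨b, rfl⟩
    exact (commute_nilProdInl_nilProdInr_of_mem_left ha b).symm
  · rintro _ ⟨b, hb, rfl⟩
    refine ⟨⟨b, rfl⟩, Subgroup.mem_centralizer_iff.mpr ?_⟩
    rintro _ ⟨a, rfl⟩
    exact commute_nilProdInl_nilProdInr_of_mem_right a hb

/-- Lemma 1(i): `γ_n(A) ≤ C_A(B)` and `γ_n(B) ≤ C_B(A)` inside `G_n = A(n)B`. -/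
theorem gamma_le_centralizer (A B : Type*) [Group A] [Group B] (n : ℕ) (hn : 2 ≤ n) :
    (((⊤ : Subgroup A).lowerCentralSeries (n - 1)).map (nilProdInl A B n) ≤ CAB A B n) ∧
    (((⊤ : Subgroup B).lowerCentralSeries (n - 1)).map (nilProdInr A B n) ≤ CBA A B n) :=
  gamma_le_centralizer_general A B n
end

section
/- Let A and B be groups, n ≥ 2, and let G_n = A(n)B be their n-th nilpotent product. Then the centralizers C_A(B) and C_B(A) are normal subgroups of G_n. -/
/-! Let `H`, `K` be the images of `A`, `B` in `G_n`; they generate `G_n`, so it suffices that both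
normalize `C_A(B) = H ∩ C(K)`. Elements of `K` even centralize it. For `a ∈ A`, the endomorphism of
`A ∗ B` that is the identity on `A` and conjugation by `a⁻¹` on `B` lies over `A × B`, so it
preserves `[A,B]` as well as `γ_{n+1}` and descends to `G_n`. It fixes `x ∈ C_A(B)` and turns
`b x = x b` into `(a⁻¹ b a) x = x (a⁻¹ b a)`, i.e. `a x a⁻¹` commutes with `B`. The case of
`C_B(A)` is symmetric. -/

open Monoid

theorem Subgroup.normal_inf_centralizer_of_sup_eq_top {G : Type*} [Group G] {H K : Subgroup G}
    (hHK : H ⊔ K = ⊤)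
    (hconj : ∀ h ∈ H, ∃ ψ : G →* G, (∀ x ∈ H, ψ x = x) ∧ ∀ k ∈ K, ψ k = h⁻¹ * k * h) :
    (H ⊓ Subgroup.centralizer (K : Set G)).Normal := by
  set C := H ⊓ Subgroup.centralizer (K : Set G)
  have conj_mem : ∀ h ∈ H, ∀ x ∈ C, h * x * h⁻¹ ∈ C := by
    rintro h hh x ⟨hxH, hxK⟩
    obtain ⟨ψ, hψH, hψK⟩ := hconj h hh
    refine ⟨H.mul_mem (H.mul_mem hh hxH) (H.inv_mem hh), fun k hk => ?_⟩
    have hcomm : h⁻¹ * k * h * x = x * (h⁻¹ * k * h) := by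
      rw [← hψK k hk, ← hψH x hxH, ← map_mul, ← map_mul, hxK k hk]
    calc k * (h * x * h⁻¹) = h * (h⁻¹ * k * h * x) * h⁻¹ := by group
      _ = h * x * h⁻¹ * k := by rw [hcomm]; group
  have H_le : H ≤ Subgroup.normalizer (C : Set G) := fun h hh x =>
    ⟨conj_mem h hh x, fun hx => by simpa [mul_assoc] using conj_mem h⁻¹ (H.inv_mem hh) _ hx⟩
  have K_le : K ≤ Subgroup.normalizer (C : Set G) :=
    (Subgroup.le_centralizer_iff.mp inf_le_right).trans (Subgroup.centralizer_le_normalizer _)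
  rw [← Subgroup.normalizer_eq_top_iff, eq_top_iff, ← hHK]
  exact sup_le H_le K_le

section NilpotentProductCentralizers

variable {A B : Type*} [Group A] [Group B] {n : ℕ}

theorem range_nilProdInl_sup_range_nilProdInr :
    (nilProdInl A B n).range ⊔ (nilProdInr A B n).range = ⊤ :=
  (Coprod.range_eq _).symm.trans (QuotientGroup.range_mk' _)

theorem nilProdKer_le_comap {φ : Coprod A B →* Coprod A B}
    (hφ : Coprod.toProd.comp φ = Coprod.toProd) :
    nilProdKer A B n ≤ (nilProdKer A B n).comap φ := fun x ⟨hcart, hγ⟩ =>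
  ⟨show Coprod.toProd (φ x) = 1 by rw [← MonoidHom.comp_apply, hφ]; exact hcart,
    Subgroup.lowerCentralSeries_mono n le_top
      (Subgroup.map_lowerCentralSeries _ φ n ▸ Subgroup.mem_map_of_mem φ hγ)⟩

theorem exists_endo_fixing_inl_conj_inr (a : A) :
    ∃ ψ : NilProd A B n →* NilProd A B n, (∀ x ∈ (nilProdInl A B n).range, ψ x = x) ∧
      ∀ y ∈ (nilProdInr A B n).range, ψ y = (nilProdInl A B n a)⁻¹ * y * nilProdInl A B n a := by
  let φ : Coprod A B →* Coprod A B :=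
    Coprod.lift Coprod.inl ((MulAut.conj (Coprod.inl a)⁻¹).toMonoidHom.comp Coprod.inr)
  have hφ : Coprod.toProd.comp φ = Coprod.toProd :=
    Coprod.hom_ext (by ext <;> simp [φ]) (by ext <;> simp [φ])
  refine ⟨QuotientGroup.map _ _ φ (nilProdKer_le_comap hφ), ?_, ?_⟩
  · rintro _ ⟨a', rfl⟩
    rfl
  · rintro _ ⟨b, rfl⟩
    simp [φ, nilProdInl, nilProdInr]

theorem exists_endo_fixing_inr_conj_inl (b : B) :
    ∃ ψ : NilProd A B n →* NilProd A B n, (∀ y ∈ (nilProdInr A B n).range, ψ y = y) ∧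
      ∀ x ∈ (nilProdInl A B n).range, ψ x = (nilProdInr A B n b)⁻¹ * x * nilProdInr A B n b := by
  let φ : Coprod A B →* Coprod A B :=
    Coprod.lift ((MulAut.conj (Coprod.inr b)⁻¹).toMonoidHom.comp Coprod.inl) Coprod.inr
  have hφ : Coprod.toProd.comp φ = Coprod.toProd :=
    Coprod.hom_ext (by ext <;> simp [φ]) (by ext <;> simp [φ])
  refine ⟨QuotientGroup.map _ _ φ (nilProdKer_le_comap hφ), ?_, ?_⟩
  · rintro _ ⟨b', rfl⟩
    rfl
  · rintro _ ⟨a, rfl⟩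
    simp [φ, nilProdInl, nilProdInr]

end NilpotentProductCentralizers

theorem centralizers_normal_general (A B : Type*) [Group A] [Group B] (n : ℕ) :
    (CAB A B n).Normal ∧ (CBA A B n).Normal := by
  refine ⟨Subgroup.normal_inf_centralizer_of_sup_eq_top range_nilProdInl_sup_range_nilProdInr ?_,
    Subgroup.normal_inf_centralizer_of_sup_eq_top
      ((sup_comm _ _).trans range_nilProdInl_sup_range_nilProdInr) ?_⟩
  · rintro _ ⟨a, rfl⟩
    exact exists_endo_fixing_inl_conj_inr a
  · rintro _ ⟨b, rfl⟩
    exact exists_endo_fixing_inr_conj_inl b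

/-- Lemma 1(ii): `C_A(B)` and `C_B(A)` are normal subgroups of `G_n = A(n)B`. -/
theorem centralizers_normal (A B : Type*) [Group A] [Group B] (n : ℕ) (hn : 2 ≤ n) :
    (CAB A B n).Normal ∧ (CBA A B n).Normal :=
  centralizers_normal_general A B n
end

section
/- Let A and B be groups, n ≥ 2, and let G_n = A(n)B be their n-th nilpotent product. Then the subgroup C_A(B)·C_B(A) of G_n intersects the Cartesian subgroup [A,B] (the image in G_n of the kernel of A ∗ B → A × B) trivially: C_A(B)C_B(A) ∩ [A,B] = 1. -/
/-
The projection `A ∗ B → A × B` kills `nilProdKer`, so it descends to `A(n)B → A × B`, and it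
sends the image of `[A,B]` to `1`. Since `C_A(B)` and `C_B(A)` commute elementwise, every
element of `C_A(B) C_B(A)` is a product `a b` with `a ∈ A`, `b ∈ B`, which projects to `(a, b)`;
so if it also lies in `[A,B]`, then `a = 1` and `b = 1`.
-/

open Monoid

theorem Subgroup.mem_sup_of_le_centralizer {G : Type*} [Group G] {H K : Subgroup G}
    (hHK : H ≤ Subgroup.centralizer K) {x : G} (hx : x ∈ H ⊔ K) :
    ∃ y ∈ H, ∃ z ∈ K, y * z = x := by
  rw [← SetLike.mem_coe, Subgroup.coe_mul_of_left_le_normalizer_right H K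
    (hHK.trans (Subgroup.centralizer_le_normalizer _))] at hx
  exact Set.mem_mul.mp hx

section NilpotentProduct

variable (A B : Type*) [Group A] [Group B] (n : ℕ)

def nilProdToProd : NilProd A B n →* A × B :=
  QuotientGroup.lift (nilProdKer A B n) Coprod.toProd fun _ hx => hx.1

theorem nilProdToProd_inl_mul_inr (a : A) (b : B) :
    nilProdToProd A B n (nilProdInl A B n a * nilProdInr A B n b) = (a, b) := by
  change Coprod.toProd (Coprod.inl a * Coprod.inr b) = (a, b)
  simp

theorem map_cartesianSubgroup_le_ker_nilProdToProd :
    (cartesianSubgroup A B).map (QuotientGroup.mk' (nilProdKer A B n)) ≤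
      (nilProdToProd A B n).ker := by
  rintro _ ⟨c, hc, rfl⟩
  exact hc

theorem CAB_le_centralizer_CBA : CAB A B n ≤ Subgroup.centralizer (CBA A B n) := by
  rintro _ ⟨-, hx⟩ _ ⟨⟨b, rfl⟩, -⟩
  exact hx _ ⟨b, rfl⟩

end NilpotentProduct

theorem centralizers_inf_cartesian_general (A B : Type*) [Group A] [Group B] (n : ℕ) :
    (CAB A B n ⊔ CBA A B n) ⊓
      (cartesianSubgroup A B).map (QuotientGroup.mk' (nilProdKer A B n)) = ⊥ := by
  rw [eq_bot_iff]
  rintro x ⟨hx, hx_cart⟩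
  obtain ⟨_, ⟨⟨a, rfl⟩, -⟩, _, ⟨⟨b, rfl⟩, -⟩, rfl⟩ :=
    Subgroup.mem_sup_of_le_centralizer (CAB_le_centralizer_CBA A B n) hx
  have hab : (a, b) = 1 := by
    rw [← nilProdToProd_inl_mul_inr A B n]
    exact map_cartesianSubgroup_le_ker_nilProdToProd A B n hx_cart
  obtain ⟨rfl, rfl⟩ := Prod.mk_eq_one.mp hab
  simp

/-- Lemma 1(iii): `C_A(B)·C_B(A) ∩ [A,B] = 1` inside `G_n = A(n)B`, where `[A,B]`
denotes the image in `G_n` of the Cartesian subgroup of `A ∗ B`. -/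
theorem centralizers_inf_cartesian (A B : Type*) [Group A] [Group B] (n : ℕ) (hn : 2 ≤ n) :
    (CAB A B n ⊔ CBA A B n) ⊓
      (cartesianSubgroup A B).map (QuotientGroup.mk' (nilProdKer A B n)) = ⊥ :=
  centralizers_inf_cartesian_general A B n
end

section
/- Let F_n (n ≥ 2) be the free group with basis x_1,…,x_n and let ql : F_n → ℤ be defined on reduced syllable forms by ql(x_{i₁}^{α₁}⋯x_{i_t}^{α_t}) = Σ_{j=1}^t tr(α_j). Then for all f, g ∈ F_n: ql(f) + ql(g) - 3 ≤ ql(fg) ≤ ql(f) + ql(g) + 3. -/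
set_option linter.unusedSectionVars false

/-- `tr m` is `-1, 0, 1` according as `m ≡ -1, 0, 1 (mod 3)`. -/
def tr (m : ℤ) : ℤ := if m % 3 = 0 then 0 else if m % 3 = 1 then 1 else -1

/-- `ql w` is the sum of `tr` of the exponents of the syllables in the
reduced syllable form of `w`: the reduced word `w.toWord` is split into maximal
runs (syllables) of letters with the same generator, and each syllable
`x_i ^ α` contributes `tr α`. -/
def ql {n : ℕ} (w : FreeGroup (Fin n)) : ℤ :=
  ((w.toWord.splitBy (fun p q => p.1 == q.1)).map
    (fun s => tr ((s.map (fun p => if p.2 then (1 : ℤ) else -1)).sum))).sum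

namespace QlMul
open List

variable {β : Type*}

theorem chain'_nil {R : β → β → Prop} : Chain' R [] := isChain_nil

theorem chain'_singleton {R : β → β → Prop} (a : β) : Chain' R [a] := isChain_singleton a

theorem chain'_cons {R : β → β → Prop} {x y : β} {l : List β} :
    Chain' R (x :: y :: l) ↔ R x y ∧ Chain' R (y :: l) := isChain_cons_cons

theorem chain'_cons' {R : β → β → Prop} {x : β} {l : List β} :
    Chain' R (x :: l) ↔ (∀ y ∈ head? l, R x y) ∧ Chain' R l := isChain_cons

theorem chain'_append {R : β → β → Prop} {l₁ l₂ : List β} :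
    Chain' R (l₁ ++ l₂) ↔ Chain' R l₁ ∧ Chain' R l₂ ∧ ∀ x ∈ l₁.getLast?, ∀ y ∈ l₂.head?, R x y :=
  isChain_append

theorem chain'_map {γ : Type*} {R : β → β → Prop} (f : γ → β) {l : List γ} :
    Chain' R (map f l) ↔ Chain' (fun a b => R (f a) (f b)) l := isChain_map f

theorem chain'_reverse {R : β → β → Prop} {l : List β} :
    Chain' R (reverse l) ↔ Chain' (flip R) l := isChain_reverse

theorem chain'_of_mem_splitBy {r : β → β → Bool} {l m : List β} (h : m ∈ l.splitBy r) :
    m.Chain' fun x y => r x y := isChain_of_mem_splitBy h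

theorem chain'_getLast_head_splitBy (r : β → β → Bool) (l : List β) :
    (l.splitBy r).Chain' fun a b => ∃ ha hb, r (a.getLast ha) (b.head hb) = false :=
  isChain_getLast_head_splitBy r l

/-- The characterizing property of `List.splitBy`. -/
def Spec (r : β → β → Bool) (l : List β) (G : List (List β)) : Prop :=
  G.flatten = l ∧ [] ∉ G ∧ (∀ g ∈ G, g.Chain' fun x y => r x y) ∧
    G.Chain' fun a b => ∃ ha hb, r (a.getLast ha) (b.head hb) = false

theorem spec_splitBy (r : β → β → Bool) (l : List β) : Spec r l (l.splitBy r) :=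
  ⟨flatten_splitBy r l, nil_notMem_splitBy r l, fun _ hg => chain'_of_mem_splitBy hg,
    chain'_getLast_head_splitBy r l⟩

theorem Spec.nil_eq {r : β → β → Bool} {G : List (List β)} (h : Spec r [] G) : G = [] := by
  obtain ⟨h1, h2, -, -⟩ := h
  cases G with
  | nil => rfl
  | cons g G' =>
    exfalso
    rw [flatten_cons] at h1
    rcases append_eq_nil_iff.mp h1 with ⟨hg, -⟩
    exact h2 (hg ▸ mem_cons_self)

theorem Spec.tail {r : β → β → Bool} {l : List β} {g : List β} {G : List (List β)}
    (h : Spec r l (g :: G)) : Spec r G.flatten G :=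
  ⟨rfl, fun hm => h.2.1 (mem_cons_of_mem _ hm), fun g' hg' => h.2.2.1 g' (mem_cons_of_mem _ hg'),
    h.2.2.2.tail⟩

theorem first_eq_of_prefix {r : β → β → Bool} {l : List β} {g h : List β}
    {G H : List (List β)} (hG : Spec r l (g :: G)) (hH : Spec r l (h :: H))
    (hp : g <+: h) : g = h := by
  obtain ⟨t, rfl⟩ := hp
  rcases eq_or_ne t [] with rfl | ht
  · simp
  exfalso
  obtain ⟨hfG, hnG, hcG, haG⟩ := hG
  obtain ⟨hfH, hnH, hcH, haH⟩ := hH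
  have hg : g ≠ [] := fun hgg => hnG (hgg ▸ mem_cons_self)
  have hflat : G.flatten = t ++ H.flatten := by
    apply append_cancel_left (as := g)
    rw [← append_assoc]
    rw [flatten_cons] at hfG hfH
    rw [hfG, hfH]
  have hGne : G ≠ [] := by
    intro hGG
    rw [hGG, flatten_nil] at hflat
    rcases append_eq_nil_iff.mp hflat.symm with ⟨h1, -⟩
    exact ht h1
  obtain ⟨g₂, G', rfl⟩ : ∃ g₂ G', G = g₂ :: G' := by
    cases G with
    | nil => exact absurd rfl hGne
    | cons a b => exact ⟨a, b, rfl⟩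
  have hg₂ : g₂ ≠ [] := fun hgg => hnG (by simp [hgg])
  -- junction in h = g ++ t is `true`
  have hchain : (g ++ t).Chain' (fun x y => r x y) := hcH _ (mem_cons_self)
  rw [chain'_append] at hchain
  have htrue : r (g.getLast hg) (t.head ht) = true := by
    apply hchain.2.2
    · rw [getLast?_eq_getLast hg]; rfl
    · rw [head?_eq_head ht]; rfl
  -- junction between g and g₂ is `false`
  obtain ⟨ha', hb', hfalse⟩ := (chain'_cons.mp haG).1
  -- heads agree
  have hhead : g₂.head hg₂ = t.head ht := by
    have e1 : (g₂ ++ G'.flatten).head? = some (g₂.head hg₂) := by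
      rw [head?_append_of_ne_nil _ hg₂, head?_eq_head]
    have e2 : (t ++ H.flatten).head? = some (t.head ht) := by
      rw [head?_append_of_ne_nil _ ht, head?_eq_head]
    rw [flatten_cons] at hflat
    rw [hflat] at e1
    rw [e1] at e2
    exact Option.some_inj.mp e2
  have : g.getLast ha' = g.getLast hg := rfl
  rw [this] at hfalse
  have : g₂.head hb' = g₂.head hg₂ := rfl
  rw [this, hhead, htrue] at hfalse
  simp at hfalse

theorem spec_unique {r : β → β → Bool} :
    ∀ (N : ℕ) (l : List β) (G H : List (List β)), l.length ≤ N →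
      Spec r l G → Spec r l H → G = H := by
  intro N
  induction N with
  | zero =>
    intro l G H hl hG hH
    have : l = [] := length_eq_zero_iff.mp (Nat.le_zero.mp hl)
    subst this
    rw [hG.nil_eq, hH.nil_eq]
  | succ N ih =>
    intro l G H hl hG hH
    rcases eq_or_ne l [] with rfl | hlne
    · rw [hG.nil_eq, hH.nil_eq]
    cases G with
    | nil => exact absurd hG.1.symm (by simpa using hlne)
    | cons g G' =>
      cases H with
      | nil => exact absurd hH.1.symm (by simpa using hlne)
      | cons h H' =>
        have hpg : g <+: l := ⟨G'.flatten, by simpa using hG.1⟩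
        have hph : h <+: l := ⟨H'.flatten, by simpa using hH.1⟩
        have hgh : g = h := by
          rcases prefix_or_prefix_of_prefix hpg hph with hp | hp
          · exact first_eq_of_prefix hG hH hp
          · exact (first_eq_of_prefix hH hG hp).symm
        subst hgh
        have hg : g ≠ [] := fun hgg => hG.2.1 (hgg ▸ mem_cons_self)
        have hflat : G'.flatten = H'.flatten := by
          apply append_cancel_left (as := g)
          have e1 := hG.1
          have e2 := hH.1
          rw [flatten_cons] at e1 e2
          exact e1.trans e2.symm
        congr 1
        refine ih G'.flatten G' H' ?_ hG.tail (hflat ▸ hH.tail)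
        have h1 : l.length = g.length + G'.flatten.length := by
          rw [← hG.1]; simp
        have h2 : 1 ≤ g.length := length_pos_iff.mpr hg
        omega

theorem splitBy_eq_of_spec {r : β → β → Bool} {l : List β} {G : List (List β)}
    (h : Spec r l G) : l.splitBy r = G :=
  spec_unique l.length l _ G le_rfl (spec_splitBy r l) h

/-! ## Syllables -/

section Syllables

variable {α : Type*} [BEq α] [LawfulBEq α]

def eb (b : Bool) : ℤ := if b then 1 else -1

def esum (s : List Bool) : ℤ := (s.map eb).sum

def run (i : α) (s : List Bool) : List (α × Bool) := s.map fun b => (i, b)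

def wordOf (S : List (α × List Bool)) : List (α × Bool) :=
  (S.map fun x => run x.1 x.2).flatten

def QS (S : List (α × List Bool)) : ℤ := (S.map fun x => tr (esum x.2)).sum

def Valid (S : List (α × List Bool)) : Prop :=
  (∀ x ∈ S, x.2 ≠ []) ∧ S.Chain' fun x y => x.1 ≠ y.1

def Q (L : List (α × Bool)) : ℤ :=
  ((L.splitBy (fun p q => p.1 == q.1)).map
    (fun s => tr ((s.map (fun p => if p.2 then (1 : ℤ) else -1)).sum))).sum

@[simp] lemma run_nil (i : α) : run i [] = [] := rfl

lemma run_ne_nil {i : α} {s : List Bool} (h : s ≠ []) : run i s ≠ [] := by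
  simpa [run] using h

@[simp] lemma wordOf_nil : wordOf ([] : List (α × List Bool)) = [] := rfl

lemma wordOf_cons (x : α × List Bool) (S : List (α × List Bool)) :
    wordOf (x :: S) = run x.1 x.2 ++ wordOf S := by
  simp [wordOf]

lemma wordOf_append (S T : List (α × List Bool)) :
    wordOf (S ++ T) = wordOf S ++ wordOf T := by
  simp [wordOf]

@[simp] lemma QS_nil : QS ([] : List (α × List Bool)) = 0 := rfl

lemma QS_cons (x : α × List Bool) (S : List (α × List Bool)) :
    QS (x :: S) = tr (esum x.2) + QS S := by simp [QS]

lemma QS_append (S T : List (α × List Bool)) : QS (S ++ T) = QS S + QS T := by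
  simp [QS]

lemma esum_append (s t : List Bool) : esum (s ++ t) = esum s + esum t := by
  simp [esum]

lemma fst_of_mem_run {p : α × Bool} {i : α} {s : List Bool} (h : p ∈ run i s) : p.1 = i := by
  simp only [run, mem_map] at h
  obtain ⟨b, -, rfl⟩ := h
  rfl

lemma chain'_run (i : α) : ∀ s : List Bool,
    Chain' (fun p q : α × Bool => p.1 == q.1) (run i s)
  | [] => chain'_nil
  | [_] => chain'_singleton _
  | b :: c :: s => chain'_cons.mpr ⟨by simp, chain'_run i (c :: s)⟩

lemma adj_chain : ∀ S : List (α × List Bool), (∀ x ∈ S, x.2 ≠ []) →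
    S.Chain' (fun x y => x.1 ≠ y.1) →
    Chain' (fun a b : List (α × Bool) =>
        ∃ ha hb, ((a.getLast ha).1 == (b.head hb).1) = false)
      (S.map fun x => run x.1 x.2)
  | [], _, _ => chain'_nil
  | [_], _, _ => chain'_singleton _
  | x :: y :: S, h1, h2 => by
    rw [map_cons, map_cons]
    refine chain'_cons.mpr ⟨?_, ?_⟩
    · have hx : x.2 ≠ [] := h1 x (by simp)
      have hy : y.2 ≠ [] := h1 y (by simp)
      refine ⟨run_ne_nil hx, run_ne_nil hy, ?_⟩
      have e1 : ((run x.1 x.2).getLast (run_ne_nil hx)).1 = x.1 :=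
        fst_of_mem_run (getLast_mem _)
      have e2 : ((run y.1 y.2).head (run_ne_nil hy)).1 = y.1 :=
        fst_of_mem_run (head_mem _)
      rw [e1, e2]
      exact beq_eq_false_iff_ne.mpr (chain'_cons.mp h2).1
    · exact adj_chain (y :: S) (fun z hz => h1 z (mem_cons_of_mem _ hz)) (chain'_cons.mp h2).2

theorem spec_wordOf {S : List (α × List Bool)} (hS : Valid S) :
    Spec (fun p q : α × Bool => p.1 == q.1) (wordOf S) (S.map fun x => run x.1 x.2) := by
  refine ⟨rfl, ?_, ?_, adj_chain S hS.1 hS.2⟩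
  · intro hmem
    obtain ⟨x, hx, hx2⟩ := mem_map.mp hmem
    exact hS.1 x hx (by simpa [run] using hx2.symm)
  · intro g hg
    obtain ⟨x, -, rfl⟩ := mem_map.mp hg
    exact chain'_run x.1 x.2

theorem Q_wordOf {S : List (α × List Bool)} (hS : Valid S) : Q (wordOf S) = QS S := by
  unfold Q
  rw [splitBy_eq_of_spec (spec_wordOf hS), map_map]
  unfold QS
  congr 1
  apply map_congr_left
  intro x _
  simp only [run, map_map, esum, eb, Function.comp_def]
  rfl

lemma run_eq : ∀ (g : List (α × Bool)), g ≠ [] →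
    Chain' (fun p q : α × Bool => p.1 == q.1) g → ∃ i s, s ≠ [] ∧ g = run i s
  | [x], _, _ => ⟨x.1, [x.2], by simp, by simp [run]⟩
  | x :: y :: g, _, hc => by
    obtain ⟨hxy, hc'⟩ := chain'_cons.mp hc
    obtain ⟨i, s, hs, he⟩ := run_eq (y :: g) (cons_ne_nil _ _) hc'
    have hi : i = x.1 := by
      cases s with
      | nil => exact absurd rfl hs
      | cons b s' =>
        have : y = (i, b) := by
          have := he
          rw [run, map_cons] at this
          exact (cons.injEq _ _ _ _ ▸ this).1
        have : y.1 = i := by rw [this]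
        rw [← this]
        exact (eq_of_beq hxy).symm
    refine ⟨x.1, x.2 :: s, cons_ne_nil _ _, ?_⟩
    have hrun : run x.1 (x.2 :: s) = (x.1, x.2) :: run x.1 s := rfl
    have hx : x = (i, x.2) := Prod.ext hi.symm rfl
    rw [hrun, ← hi, ← he, ← hx]

lemma exists_syl : ∀ (G : List (List (α × Bool))), [] ∉ G →
    (∀ g ∈ G, Chain' (fun p q : α × Bool => p.1 == q.1) g) →
    ∃ S : List (α × List Bool), (∀ x ∈ S, x.2 ≠ []) ∧ (S.map fun x => run x.1 x.2) = G
  | [], _, _ => ⟨[], by simp, rfl⟩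
  | g :: G', hnil, hch => by
    obtain ⟨i, s, hs, rfl⟩ :=
      run_eq g (fun h => hnil (h ▸ mem_cons_self)) (hch g (mem_cons_self))
    obtain ⟨S', hS'1, hS'2⟩ := exists_syl G' (fun h => hnil (mem_cons_of_mem _ h))
      (fun g' hg' => hch g' (mem_cons_of_mem _ hg'))
    refine ⟨(i, s) :: S', ?_, by simp [hS'2]⟩
    intro x hx
    rcases mem_cons.mp hx with rfl | hx
    · exact hs
    · exact hS'1 x hx

theorem exists_valid (L : List (α × Bool)) : ∃ S, Valid S ∧ wordOf S = L := by
  have hspec := spec_splitBy (fun p q : α × Bool => p.1 == q.1) L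
  obtain ⟨S, hne, hmap⟩ := exists_syl _ hspec.2.1 hspec.2.2.1
  refine ⟨S, ⟨hne, ?_⟩, ?_⟩
  · have h4 := hspec.2.2.2
    rw [← hmap, chain'_map] at h4
    refine h4.imp ?_
    rintro x y ⟨ha, hb, hf⟩
    have e1 : ((run x.1 x.2).getLast ha).1 = x.1 := fst_of_mem_run (getLast_mem _)
    have e2 : ((run y.1 y.2).head hb).1 = y.1 := fst_of_mem_run (head_mem _)
    have hf' : (((run x.1 x.2).getLast ha).1 == ((run y.1 y.2).head hb).1) = false := hf
    rw [e1, e2] at hf'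
    exact beq_eq_false_iff_ne.mp hf'
  · show (S.map fun x => run x.1 x.2).flatten = L
    rw [hmap]
    exact hspec.1

/-! ## tr facts and dd -/

lemma tr_neg (m : ℤ) : tr (-m) = - tr m := by
  unfold tr
  split_ifs <;> omega

lemma tr_cases (m : ℤ) : tr m = -1 ∨ tr m = 0 ∨ tr m = 1 := by
  unfold tr
  split_ifs <;> simp

def sylE (x : α × List Bool) : α × ℤ := (x.1, esum x.2)

def dd [DecidableEq α] : Option (α × ℤ) → Option (α × ℤ) → ℤ
  | some x, some y => if x.1 = y.1 then tr (x.2 + y.2) - tr x.2 - tr y.2 else 0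
  | none, _ => 0
  | some _, none => 0

variable [DecidableEq α]

@[simp] lemma dd_none_left (o : Option (α × ℤ)) : dd none o = 0 := rfl

@[simp] lemma dd_none_right (o : Option (α × ℤ)) : dd o none = 0 := by
  cases o <;> rfl

lemma dd_some_some (x y : α × ℤ) :
    dd (some x) (some y) = if x.1 = y.1 then tr (x.2 + y.2) - tr x.2 - tr y.2 else 0 := rfl

lemma dd_bounds (o₁ o₂ : Option (α × ℤ)) : -3 ≤ dd o₁ o₂ ∧ dd o₁ o₂ ≤ 3 := by
  match o₁, o₂ with
  | none, o₂ => simp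
  | some x, none => simp
  | some x, some y =>
    rw [dd_some_some]
    split_ifs
    · rcases tr_cases (x.2 + y.2) with h1 | h1 | h1 <;>
        rcases tr_cases x.2 with h2 | h2 | h2 <;>
          rcases tr_cases y.2 with h3 | h3 | h3 <;> omega
    · simp

/-! ## The append formula for Q -/

theorem Q_append {S T : List (α × List Bool)} (hS : Valid S) (hT : Valid T) :
    Q (wordOf S ++ wordOf T) =
      QS S + QS T + dd (S.getLast?.map sylE) (T.head?.map sylE) := by
  rcases eq_or_ne S [] with rfl | hSne
  · simp [Q_wordOf hT]
  rcases eq_or_ne T [] with rfl | hTne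
  · simp [Q_wordOf hS]
  obtain ⟨S', x, rfl⟩ : ∃ S' x, S = S' ++ [x] := by
    rcases S.eq_nil_or_concat with h | ⟨S', x, h⟩
    · exact absurd h hSne
    · exact ⟨S', x, by simpa using h⟩
  obtain ⟨y, T', rfl⟩ : ∃ y T', T = y :: T' := by
    cases T with
    | nil => exact absurd rfl hTne
    | cons y T' => exact ⟨y, T', rfl⟩
  rw [getLast?_concat, head?_cons, Option.map_some, Option.map_some, dd_some_some]
  have hx2 : x.2 ≠ [] := hS.1 x (by simp)
  have hy2 : y.2 ≠ [] := hT.1 y (by simp)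
  have hS' : Chain' (fun a b : α × List Bool => a.1 ≠ b.1) (S' ++ [x]) := hS.2
  have hT' : Chain' (fun a b : α × List Bool => a.1 ≠ b.1) (y :: T') := hT.2
  by_cases hxy : (sylE x).1 = (sylE y).1
  · -- merge case
    have hxy' : x.1 = y.1 := hxy
    rw [if_pos hxy]
    have hw : wordOf (S' ++ [x]) ++ wordOf (y :: T') =
        wordOf (S' ++ (x.1, x.2 ++ y.2) :: T') := by
      rw [wordOf_append, wordOf_append, wordOf_cons, wordOf_cons, wordOf_cons, wordOf_nil,
        append_nil]
      have : run x.1 (x.2 ++ y.2) = run x.1 x.2 ++ run y.1 y.2 := by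
        rw [← hxy']; simp [run]
      rw [this]
      simp [append_assoc]
    have hM : Valid (S' ++ (x.1, x.2 ++ y.2) :: T') := by
      constructor
      · intro z hz
        rcases mem_append.mp hz with hz | hz
        · exact hS.1 z (mem_append.mpr (Or.inl hz))
        · rcases mem_cons.mp hz with rfl | hz
          · simp only []
            simp [List.append_eq_nil_iff, hx2]
          · exact hT.1 z (mem_cons_of_mem _ hz)
      · rw [chain'_append]
        rw [chain'_append] at hS'
        refine ⟨hS'.1, ?_, ?_⟩
        · rw [chain'_cons']
          refine ⟨?_, (chain'_cons'.mp hT').2⟩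
          intro z hz
          have := (chain'_cons'.mp hT').1 z hz
          simpa [← hxy'] using this
        · intro z hz w hw
          rw [head?_cons, Option.mem_some_iff] at hw
          subst hw
          exact hS'.2.2 z hz x (by simp)
    rw [hw, Q_wordOf hM, QS_append, QS_append, QS_cons, QS_cons, QS_cons, QS_nil,
      esum_append]
    show QS S' + (tr (esum x.2 + esum y.2) + QS T') =
      QS S' + (tr (esum x.2) + 0) + (tr (esum y.2) + QS T') +
        (tr ((sylE x).2 + (sylE y).2) - tr (sylE x).2 - tr (sylE y).2)
    show QS S' + (tr (esum x.2 + esum y.2) + QS T') =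
      QS S' + (tr (esum x.2) + 0) + (tr (esum y.2) + QS T') +
        (tr (esum x.2 + esum y.2) - tr (esum x.2) - tr (esum y.2))
    ring
  · -- no-merge case
    have hxy' : x.1 ≠ y.1 := hxy
    rw [if_neg hxy]
    have hM : Valid ((S' ++ [x]) ++ (y :: T')) := by
      refine ⟨?_, ?_⟩
      · intro z hz
        rcases mem_append.mp hz with hz | hz
        · exact hS.1 z hz
        · exact hT.1 z hz
      · rw [chain'_append]
        refine ⟨hS', hT', ?_⟩
        intro z hz w hw
        rw [getLast?_concat, Option.mem_some_iff] at hz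
        rw [head?_cons, Option.mem_some_iff] at hw
        subst hz; subst hw
        exact hxy'
    rw [← wordOf_append, Q_wordOf hM, QS_append]
    ring

/-! ## Inversion -/

def invS (S : List (α × List Bool)) : List (α × List Bool) :=
  (S.map fun x => (x.1, (x.2.map not).reverse)).reverse

lemma eb_not (b : Bool) : eb (!b) = - eb b := by cases b <;> simp [eb]

lemma esum_rev_not (s : List Bool) : esum ((s.map not).reverse) = - esum s := by
  induction s with
  | nil => rfl
  | cons b s ih =>
    rw [map_cons, reverse_cons, esum_append, ih]
    have h1 : esum [!b] = - eb b := by simp [esum, eb_not]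
    have h2 : esum (b :: s) = eb b + esum s := by simp [esum]
    rw [h1, h2]; ring

lemma valid_invS {S : List (α × List Bool)} (hS : Valid S) : Valid (invS S) := by
  constructor
  · intro x hx
    simp only [invS, mem_reverse, mem_map] at hx
    obtain ⟨z, hz, rfl⟩ := hx
    simpa using hS.1 z hz
  · rw [invS, chain'_reverse, chain'_map]
    exact hS.2.imp fun {a b} h => h.symm

lemma invRev_run (i : α) (s : List Bool) :
    FreeGroup.invRev (run i s) = run i ((s.map not).reverse) := by
  simp [FreeGroup.invRev, run, map_map, Function.comp_def, map_reverse]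

lemma invRev_append (L₁ L₂ : List (α × Bool)) :
    FreeGroup.invRev (L₁ ++ L₂) = FreeGroup.invRev L₂ ++ FreeGroup.invRev L₁ := by
  simp [FreeGroup.invRev]

lemma invRev_wordOf (S : List (α × List Bool)) :
    FreeGroup.invRev (wordOf S) = wordOf (invS S) := by
  induction S with
  | nil => simp [invS, FreeGroup.invRev]
  | cons x S ih =>
    rw [wordOf_cons, invRev_append, ih, invRev_run]
    have : invS (x :: S) = invS S ++ [(x.1, (x.2.map not).reverse)] := by
      simp [invS]
    rw [this, wordOf_append, wordOf_cons, wordOf_nil, append_nil]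

lemma invS_cons (x : α × List Bool) (S : List (α × List Bool)) :
    invS (x :: S) = invS S ++ [(x.1, (x.2.map not).reverse)] := by simp [invS]

lemma QS_invS (S : List (α × List Bool)) : QS (invS S) = - QS S := by
  induction S with
  | nil => rfl
  | cons x S ih =>
    rw [invS_cons, QS_append, ih]
    simp only [QS_cons, QS_nil, esum_rev_not, tr_neg]
    ring

lemma getLast?_invS (S : List (α × List Bool)) :
    (invS S).getLast? = S.head?.map fun x => (x.1, (x.2.map not).reverse) := by
  rw [invS, getLast?_reverse, head?_map]

/-! ## Reduced words -/

def red (L : List (α × Bool)) : Prop :=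
  Chain' (fun x y : α × Bool => ¬(x.1 = y.1 ∧ x.2 = !y.2)) L

lemma red_nil : red ([] : List (α × Bool)) := chain'_nil

lemma reduce_eq_self_of_red {L : List (α × Bool)} (h : red L) : FreeGroup.reduce L = L := by
  induction L with
  | nil => rfl
  | cons x L ih =>
    have hL : red L := h.tail
    rw [FreeGroup.reduce.cons, ih hL]
    cases L with
    | nil => rfl
    | cons y t =>
      have hxy := (chain'_cons.mp h).1
      simp only []
      rw [if_neg hxy]

lemma red_reduce (L : List (α × Bool)) : red (FreeGroup.reduce L) := by
  induction L with
  | nil => exact red_nil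
  | cons x L ih =>
    rw [FreeGroup.reduce.cons]
    rcases h : FreeGroup.reduce L with - | ⟨hd, tl⟩
    · exact chain'_singleton _
    · rw [h] at ih
      simp only []
      split_ifs with hc
      · exact ih.tail
      · exact chain'_cons.mpr ⟨hc, ih⟩

lemma red_toWord (x : FreeGroup α) : red x.toWord := by
  rw [← FreeGroup.reduce_toWord]
  exact red_reduce _

/-! ## Cancellation decomposition -/

theorem decomp (L₁ : List (α × Bool)) : ∀ L₂ : List (α × Bool), red L₁ → red L₂ →
    ∃ a c b, L₁ = a ++ c ∧ L₂ = FreeGroup.invRev c ++ b ∧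
      ∀ x ∈ a.getLast?, ∀ y ∈ b.head?, ¬(x.1 = y.1 ∧ x.2 = !y.2) := by
  induction L₁ using List.reverseRecOn with
  | nil =>
    intro L₂ _ _
    exact ⟨[], [], L₂, by simp, by simp [FreeGroup.invRev], by simp⟩
  | append_singleton A x ih =>
    intro L₂ h1 h2
    cases L₂ with
    | nil =>
      refine ⟨A ++ [x], [], [], by simp, by simp [FreeGroup.invRev], by simp⟩
    | cons y B =>
      by_cases hc : x.1 = y.1 ∧ x.2 = !y.2
      · have hA : red A := (chain'_append.mp h1).1
        have hB : red B := h2.tail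
        obtain ⟨a, c, b, e1, e2, hj⟩ := ih B hA hB
        refine ⟨a, c ++ [x], b, by rw [e1, append_assoc], ?_, hj⟩
        have hinv : FreeGroup.invRev (c ++ [x]) = (x.1, !x.2) :: FreeGroup.invRev c := by
          simp [FreeGroup.invRev]
        have hy : y = (x.1, !x.2) := by
          have h2' : y.2 = !x.2 := by
            have := hc.2
            cases hx2 : x.2 <;> cases hy2 : y.2 <;> simp_all
          exact Prod.ext hc.1.symm h2'
        rw [hinv, ← hy, e2]
        rfl
      · refine ⟨A ++ [x], [], y :: B, by simp, by simp [FreeGroup.invRev], ?_⟩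
        intro x' hx' y' hy'
        rw [getLast?_concat, Option.mem_some_iff] at hx'
        rw [head?_cons, Option.mem_some_iff] at hy'
        subst hx'; subst hy'
        exact hc


/-! ## Edge letters of syllable words -/

lemma head?_wordOf_cons {y : α × List Bool} (T : List (α × List Bool)) (h : y.2 ≠ []) :
    (wordOf (y :: T)).head? = y.2.head?.map fun b => (y.1, b) := by
  rw [wordOf_cons, head?_append_of_ne_nil _ (run_ne_nil h), run, head?_map]

lemma getLast?_wordOf_concat {x : α × List Bool} (S' : List (α × List Bool)) (h : x.2 ≠ []) :
    (wordOf (S' ++ [x])).getLast? = x.2.getLast?.map fun b => (x.1, b) := by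
  rw [wordOf_append, wordOf_cons, wordOf_nil, append_nil, getLast?_append]
  have h1 : (run x.1 x.2).getLast? = x.2.getLast?.map fun b => (x.1, b) := by
    rw [run, getLast?_map]
  rw [h1]
  obtain ⟨b, hb⟩ : ∃ b, x.2.getLast? = some b := by
    rw [getLast?_eq_getLast h]; exact ⟨_, rfl⟩
  rw [hb]
  rfl

lemma getLast?_invRev (L : List (α × Bool)) :
    (FreeGroup.invRev L).getLast? = L.head?.map fun p => (p.1, !p.2) := by
  rw [FreeGroup.invRev, getLast?_reverse, head?_map]

end Syllables

end QlMul

open List QlMul in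
theorem ql_mul (n : ℕ) (hn : 2 ≤ n) (f g : FreeGroup (Fin n)) :
    ql f + ql g - 3 ≤ ql (f * g) ∧ ql (f * g) ≤ ql f + ql g + 3 := by
  classical
  obtain ⟨a, c, b, e1, e2, hj⟩ := decomp f.toWord g.toWord (red_toWord f) (red_toWord g)
  have h1 : red (a ++ c) := e1 ▸ red_toWord f
  have h2 : red (FreeGroup.invRev c ++ b) := e2 ▸ red_toWord g
  have ha : red a := (chain'_append.mp h1).1
  have hbred : red b := (chain'_append.mp h2).2.1
  have hab : red (a ++ b) := chain'_append.mpr ⟨ha, hbred, hj⟩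
  have hfg : (f * g).toWord = a ++ b := by
    have hmk : f * g = FreeGroup.mk (a ++ b) := by
      conv_lhs => rw [← FreeGroup.mk_toWord (x := f), ← FreeGroup.mk_toWord (x := g)]
      rw [e1, e2, ← FreeGroup.mul_mk, ← FreeGroup.mul_mk, ← FreeGroup.mul_mk,
        ← FreeGroup.inv_mk]
      group
    rw [hmk, FreeGroup.toWord_mk, reduce_eq_self_of_red hab]
  obtain ⟨A, hA, haw⟩ := exists_valid a
  obtain ⟨C, hC, hcw⟩ := exists_valid c
  obtain ⟨B, hB, hbw⟩ := exists_valid b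
  have Ef : ql f = QS A + QS C + dd (A.getLast?.map sylE) (C.head?.map sylE) := by
    show Q f.toWord = _
    rw [e1, ← haw, ← hcw, Q_append hA hC]
  have Eg : ql g = - QS C + QS B +
      dd ((invS C).getLast?.map sylE) (B.head?.map sylE) := by
    show Q g.toWord = _
    rw [e2, ← hcw, ← hbw, invRev_wordOf, Q_append (valid_invS hC) hB, QS_invS]
  have Efg : ql (f * g) = QS A + QS B + dd (A.getLast?.map sylE) (B.head?.map sylE) := by
    show Q (f * g).toWord = _
    rw [hfg, ← haw, ← hbw, Q_append hA hB]
  have hbd1 := dd_bounds (A.getLast?.map sylE) (C.head?.map sylE)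
  have hbd2 := dd_bounds ((invS C).getLast?.map sylE) (B.head?.map sylE)
  have hbd3 := dd_bounds (A.getLast?.map sylE) (B.head?.map sylE)
  have hz : (dd (A.getLast?.map sylE) (C.head?.map sylE) = 0 ∧
        dd ((invS C).getLast?.map sylE) (B.head?.map sylE) = 0) ∨
      (dd (A.getLast?.map sylE) (C.head?.map sylE) = 0 ∧
        dd (A.getLast?.map sylE) (B.head?.map sylE) = 0) ∨
      (dd ((invS C).getLast?.map sylE) (B.head?.map sylE) = 0 ∧
        dd (A.getLast?.map sylE) (B.head?.map sylE) = 0) := by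
    rcases A.eq_nil_or_concat with rfl | ⟨A', xA, hAe⟩
    · right; left
      constructor <;> simp
    rw [concat_eq_append] at hAe
    subst hAe
    cases C with
    | nil =>
      left
      constructor <;> simp [invS]
    | cons yC C' =>
      cases B with
      | nil =>
        right; right
        constructor <;> simp
      | cons yB B' =>
        have hu : xA.2 ≠ [] := hA.1 xA (by simp)
        have ht : yC.2 ≠ [] := hC.1 yC (by simp)
        have hv : yB.2 ≠ [] := hB.1 yB (by simp)
        have eA : (A' ++ [xA]).getLast? = some xA := getLast?_concat
        have eC : (yC :: C').head? = some yC := rfl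
        have eB : (yB :: B').head? = some yB := rfl
        have eIC : (invS (yC :: C')).getLast? = some (yC.1, (yC.2.map not).reverse) := by
          rw [getLast?_invS]; rfl
        rw [eA, eC, eB, eIC]
        simp only [Option.map_some]
        have hsE1 : sylE (yC.1, (yC.2.map not).reverse) = (yC.1, - esum yC.2) := by
          simp [sylE, esum_rev_not]
        rw [hsE1]
        by_cases hpq : xA.1 = yC.1 <;> by_cases hqr : yC.1 = yB.1
        · -- all generators equal: impossible
          exfalso
          obtain ⟨sA, hsA⟩ : ∃ sA, xA.2.getLast? = some sA :=
            ⟨_, getLast?_eq_getLast hu⟩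
          obtain ⟨tC, htC⟩ : ∃ tC, yC.2.head? = some tC := ⟨_, head?_eq_head ht⟩
          obtain ⟨vB, hvB⟩ : ∃ vB, yB.2.head? = some vB := ⟨_, head?_eq_head hv⟩
          have haL : a.getLast? = some (xA.1, sA) := by
            rw [← haw, getLast?_wordOf_concat A' hu, hsA]; rfl
          have hcH : c.head? = some (yC.1, tC) := by
            rw [← hcw, head?_wordOf_cons C' ht, htC]; rfl
          have hbH : b.head? = some (yB.1, vB) := by
            rw [← hbw, head?_wordOf_cons B' hv, hvB]; rfl
          have hicL : (FreeGroup.invRev c).getLast? = some (yC.1, !tC) := by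
            rw [getLast?_invRev, hcH]; rfl
          have j1 := (chain'_append.mp h1).2.2 (xA.1, sA) (by rw [haL]; rfl)
            (yC.1, tC) (by rw [hcH]; rfl)
          have j2 := (chain'_append.mp h2).2.2 (yC.1, !tC) (by rw [hicL]; rfl)
            (yB.1, vB) (by rw [hbH]; rfl)
          have j3 := hj (xA.1, sA) (by rw [haL]; rfl) (yB.1, vB) (by rw [hbH]; rfl)
          have j1' : sA = tC := by
            by_contra hne
            refine j1 ⟨hpq, ?_⟩
            show sA = !tC
            revert hne; cases sA <;> cases tC <;> intro hne
            · exact absurd rfl hne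
            · rfl
            · rfl
            · exact absurd rfl hne
          have j2' : tC ≠ vB := by
            intro hEq
            exact j2 ⟨hqr, by rw [hEq]⟩
          have j3' : sA = vB := by
            by_contra hne
            refine j3 ⟨hpq.trans hqr, ?_⟩
            show sA = !vB
            revert hne; cases sA <;> cases vB <;> intro hne
            · exact absurd rfl hne
            · rfl
            · rfl
            · exact absurd rfl hne
          exact j2' (j1'.symm.trans j3')
        · -- p = q, q ≠ r, hence p ≠ r
          right; right
          have hpr : ¬ xA.1 = yB.1 := fun h => hqr (hpq ▸ h)
          constructor
          · simp [dd_some_some, sylE, hqr]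
          · simp [dd_some_some, sylE, hpr]
        · -- p ≠ q, q = r, hence p ≠ r
          right; left
          have hpr : ¬ xA.1 = yB.1 := fun h => hpq (h.trans hqr.symm)
          constructor
          · simp [dd_some_some, sylE, hpq]
          · simp [dd_some_some, sylE, hpr]
        · -- p ≠ q, q ≠ r
          left
          constructor
          · simp [dd_some_some, sylE, hpq]
          · simp [dd_some_some, sylE, hqr]
  rw [Ef, Eg, Efg]
  omega
end

section
/- Let F_n (n ≥ 2) be the free group with basis x_1,…,x_n and let ql : F_n → ℤ be defined on reduced syllable forms by ql(x_{i₁}^{α₁}⋯x_{i_t}^{α_t}) = Σ_{j=1}^t tr(α_j). Then for all f, g ∈ F_n the commutator [f,g] = f⁻¹g⁻¹fg satisfies -9 ≤ ql([f,g]) ≤ 9. -/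
theorem tr_neg (m : ℤ) : tr (-m) = -tr m := by
  unfold tr; split_ifs <;> omega

theorem neg_one_le_tr (m : ℤ) : -1 ≤ tr m := by
  unfold tr; split_ifs <;> omega

theorem tr_le_one (m : ℤ) : tr m ≤ 1 := by
  unfold tr; split_ifs <;> omega

theorem List.splitBy_cons_cons {β : Type*} (r : β → β → Bool) (a b : β) (l : List β) :
    (a :: b :: l).splitBy r =
      if r a b then ((b :: l).splitBy r).modifyHead (a :: ·) else [a] :: (b :: l).splitBy r := by
  split_ifs with hab
  · obtain ⟨g, gs, hG⟩ :=
      List.exists_cons_of_ne_nil (List.splitBy_ne_nil (r := r).mpr (List.cons_ne_nil b l))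
    have hflat := List.flatten_splitBy r (b :: l)
    have hnil := List.nil_notMem_splitBy r (b :: l)
    have hchain := List.isChain_getLast_head_splitBy r (b :: l)
    have hg : ∀ m ∈ g :: gs, m.IsChain fun x y => r x y := fun m hm =>
      List.isChain_of_mem_splitBy (hG ▸ hm)
    rw [hG] at hflat hnil hchain
    obtain ⟨g, rfl⟩ : ∃ g', g = b :: g' := by
      obtain ⟨c, g', rfl⟩ := List.exists_cons_of_ne_nil (List.ne_of_not_mem_cons hnil).symm
      simp_all
    rw [hG, List.modifyHead_cons, List.splitBy_eq_iff]
    refine ⟨by simp [← hflat], by simp_all, ?_, ?_⟩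
    · rintro m (_ | ⟨_, hm⟩)
      · exact List.isChain_cons_cons.mpr ⟨hab, hg _ List.mem_cons_self⟩
      · exact hg m (List.mem_cons_of_mem _ hm)
    · cases gs with
      | nil => exact List.isChain_singleton _
      | cons h hs =>
        obtain ⟨⟨_, hh, hlast⟩, hrest⟩ := List.isChain_cons_cons.mp hchain
        exact List.isChain_cons_cons.mpr ⟨⟨List.cons_ne_nil _ _, hh, by simpa using hlast⟩, hrest⟩
  · simpa [List.splitBy_of_isChain] using List.splitBy_append_cons (l := [a]) l (by simpa using hab)

namespace FreeGroup

variable {α : Type*}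

def invSyllable (p : α × ℤ) : α × ℤ := (p.1, -p.2)

def trSum (S : List (α × ℤ)) : ℤ := (S.map fun p => tr p.2).sum

theorem trSum_reverse (S : List (α × ℤ)) : trSum S.reverse = trSum S := by
  simp [trSum, List.sum_reverse]

theorem trSum_map_invSyllable (S : List (α × ℤ)) : trSum (S.map invSyllable) = -trSum S := by
  simp [trSum, List.sum_neg, Function.comp_def, invSyllable, tr_neg]

variable [DecidableEq α]

def consSyllable (p : α × ℤ) : List (α × ℤ) → List (α × ℤ)
  | q :: S => if p.1 = q.1 then (p.1, p.2 + q.2) :: S else p :: q :: S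
  | [] => [p]

def mergeDefect : Option (α × ℤ) → Option (α × ℤ) → ℤ
  | some p, some q => if p.1 = q.1 then tr (p.2 + q.2) - tr p.2 - tr q.2 else 0
  | _, _ => 0

section consSyllable

variable (p : α × ℤ) (S : List (α × ℤ))

theorem exists_head?_consSyllable : ∃ k, (consSyllable p S).head? = some (p.1, k) := by
  cases S with
  | nil => exact ⟨p.2, rfl⟩
  | cons q S => by_cases h : p.1 = q.1 <;> simp [consSyllable, h, Prod.ext_iff]

theorem consSyllable_eq_cons {p : α × ℤ} {S : List (α × ℤ)} (h : ∀ q ∈ S.head?, p.1 ≠ q.1) :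
    consSyllable p S = p :: S := by
  cases S with
  | nil => rfl
  | cons q S => simp_all [consSyllable]

theorem consSyllable_consSyllable {p q : α × ℤ} (h : p.1 = q.1) (S : List (α × ℤ)) :
    consSyllable p (consSyllable q S) = consSyllable (p.1, p.2 + q.2) S := by
  cases S with
  | nil => simp [consSyllable, h]
  | cons r S =>
    by_cases hqr : q.1 = r.1 <;> simp [consSyllable, h, hqr, add_assoc]

theorem consSyllable_append {T : List (α × ℤ)} (hT : T ≠ []) (U : List (α × ℤ)) :
    consSyllable p (T ++ U) = consSyllable p T ++ U := by
  obtain ⟨q, T, rfl⟩ := List.exists_cons_of_ne_nil hT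
  by_cases h : p.1 = q.1 <;> simp [consSyllable, h]

theorem consSyllable_map_invSyllable :
    consSyllable (invSyllable p) (S.map invSyllable) = (consSyllable p S).map invSyllable := by
  cases S with
  | nil => rfl
  | cons q S => by_cases h : p.1 = q.1 <;> simp [consSyllable, invSyllable, h, add_comm]

theorem isChain_consSyllable {S : List (α × ℤ)} (hS : S.IsChain fun p q => p.1 ≠ q.1) :
    (consSyllable p S).IsChain fun p q => p.1 ≠ q.1 := by
  cases S with
  | nil => exact List.isChain_singleton p
  | cons q S =>
    by_cases h : p.1 = q.1
    · rw [consSyllable, if_pos h]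
      rw [List.isChain_cons] at hS ⊢
      exact ⟨fun r hr => h ▸ hS.1 r hr, hS.2⟩
    · rw [consSyllable, if_neg h]
      exact List.isChain_cons_cons.mpr ⟨h, hS⟩

theorem trSum_consSyllable :
    trSum (consSyllable p S) = tr p.2 + trSum S + mergeDefect (some p) S.head? := by
  cases S with
  | nil => simp [consSyllable, trSum, mergeDefect]
  | cons q S =>
    by_cases h : p.1 = q.1 <;> simp [consSyllable, trSum, mergeDefect, h]; ring

end consSyllable

theorem foldr_consSyllable_consSyllable (p : α × ℤ) (S T : List (α × ℤ)) :
    (consSyllable p S).foldr consSyllable T = consSyllable p (S.foldr consSyllable T) := by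
  cases S with
  | nil => rfl
  | cons q S =>
    by_cases h : p.1 = q.1
    · rw [consSyllable, if_pos h, List.foldr_cons, List.foldr_cons, consSyllable_consSyllable h]
    · rw [consSyllable, if_neg h]; rfl

theorem trSum_foldr_consSyllable {S : List (α × ℤ)} (hS : S.IsChain fun p q => p.1 ≠ q.1)
    (T : List (α × ℤ)) :
    trSum (S.foldr consSyllable T) = trSum S + trSum T + mergeDefect S.getLast? T.head? := by
  induction S with
  | nil => simp [trSum, mergeDefect]
  | cons p S ih =>
    cases S with
    | nil => simpa [trSum] using trSum_consSyllable p T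
    | cons q S =>
      rw [List.isChain_cons_cons] at hS
      obtain ⟨k, hk⟩ : ∃ k, (List.foldr consSyllable T (q :: S)).head? = some (q.1, k) :=
        exists_head?_consSyllable _ _
      have hpq : mergeDefect (some p) (some (q.1, k)) = 0 := if_neg hS.1
      rw [List.foldr_cons, trSum_consSyllable, hk, hpq, ih hS.2, List.getLast?_cons_cons]
      simp only [trSum, List.map_cons, List.sum_cons]
      ring

theorem consSyllable_reverse {S : List (α × ℤ)} (hS : S.IsChain fun p q => p.1 ≠ q.1)
    (p : α × ℤ) : consSyllable p S.reverse = (S.foldr consSyllable [p]).reverse := by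
  induction S with
  | nil => rfl
  | cons q S ih =>
    cases S with
    | nil => by_cases h : p.1 = q.1 <;> simp [consSyllable, h, eq_comm, add_comm]
    | cons r S =>
      rw [List.isChain_cons_cons] at hS
      obtain ⟨k, hk⟩ : ∃ k, (List.foldr consSyllable [p] (r :: S)).head? = some (r.1, k) :=
        exists_head?_consSyllable _ _
      rw [List.reverse_cons, consSyllable_append _ (by simp), ih hS.2]
      conv_rhs => rw [List.foldr_cons, consSyllable_eq_cons (by rw [hk]; simpa using hS.1)]
      rw [List.reverse_cons]

/-- On a reduced word this is its reduced syllable form; on an arbitrary word adjacent syllables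
still have distinct letters, but exponents may vanish. -/
def syllables (w : List (α × Bool)) : List (α × ℤ) :=
  w.foldr (fun x => consSyllable (x.1, if x.2 then 1 else -1)) []

section syllables

variable (w v : List (α × Bool))

theorem syllables_cons (x : α × Bool) :
    syllables (x :: w) = consSyllable (x.1, if x.2 then 1 else -1) (syllables w) := rfl

theorem isChain_syllables : (syllables w).IsChain fun p q => p.1 ≠ q.1 := by
  induction w with
  | nil => exact List.isChain_nil
  | cons x w ih => exact isChain_consSyllable _ ih

theorem syllables_append : syllables (w ++ v) = (syllables w).foldr consSyllable (syllables v) := by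
  induction w with
  | nil => rfl
  | cons x w ih =>
    rw [List.cons_append, syllables_cons, ih, syllables_cons, foldr_consSyllable_consSyllable]

theorem trSum_syllables_append :
    trSum (syllables (w ++ v)) = trSum (syllables w) + trSum (syllables v) +
      mergeDefect (syllables w).getLast? (syllables v).head? := by
  rw [syllables_append, trSum_foldr_consSyllable (isChain_syllables w)]

theorem syllables_reverse : syllables w.reverse = (syllables w).reverse := by
  induction w using List.reverseRecOn with
  | nil => rfl
  | append_singleton w x ih =>
    rw [List.reverse_append, List.reverse_singleton, List.singleton_append, syllables_cons, ih,
      consSyllable_reverse (isChain_syllables w), syllables_append]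
    rfl

theorem syllables_map_not :
    syllables (w.map fun x => (x.1, !x.2)) = (syllables w).map invSyllable := by
  induction w with
  | nil => rfl
  | cons x w ih =>
    rw [List.map_cons, syllables_cons, ih, syllables_cons, ← consSyllable_map_invSyllable]
    cases x.2 <;> rfl

theorem syllables_invRev : syllables (invRev w) = ((syllables w).map invSyllable).reverse := by
  rw [invRev, syllables_reverse, syllables_map_not]

theorem trSum_syllables_invRev : trSum (syllables (invRev w)) = -trSum (syllables w) := by
  rw [syllables_invRev, trSum_reverse, trSum_map_invSyllable]

theorem getLast?_syllables_invRev :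
    (syllables (invRev w)).getLast? = (syllables w).head?.map invSyllable := by
  simp [syllables_invRev]

end syllables

theorem map_sum_splitBy_eq_map_snd_syllables (w : List (α × Bool)) :
    (w.splitBy fun p q => p.1 == q.1).map
        (fun s => (s.map fun p => if p.2 then (1 : ℤ) else -1).sum) =
      (syllables w).map Prod.snd := by
  induction w with
  | nil => rfl
  | cons x w ih =>
    cases w with
    | nil => simp [List.splitBy_of_isChain, syllables, consSyllable]
    | cons y w =>
      obtain ⟨k, hk⟩ := exists_head?_consSyllable (y.1, if y.2 then 1 else -1) (syllables w)
      obtain ⟨S, hS⟩ := List.head?_eq_some_iff.mp hk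
      obtain ⟨g, gs, hG⟩ := List.exists_cons_of_ne_nil
        (List.splitBy_ne_nil (r := fun p q : α × Bool => p.1 == q.1).mpr (List.cons_ne_nil y w))
      rw [← syllables_cons] at hS
      rw [hS, hG, List.map_cons, List.map_cons, List.cons.injEq] at ih
      rw [List.splitBy_cons_cons, syllables_cons, hS, hG]
      by_cases h : x.1 = y.1 <;> simp [h, consSyllable, ih]

theorem abs_mergeDefect_le (A B : Option (α × ℤ)) : |mergeDefect A B| ≤ 3 := by
  match A, B with
  | some p, some q =>
    simp only [mergeDefect]
    split_ifs
    · rw [abs_le]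
      constructor <;> linarith [neg_one_le_tr p.2, tr_le_one p.2, neg_one_le_tr q.2, tr_le_one q.2,
        neg_one_le_tr (p.2 + q.2), tr_le_one (p.2 + q.2)]
    · norm_num
  | none, _ => simp [mergeDefect]
  | some _, none => simp [mergeDefect]

theorem abs_mergeDefect_sub_le (A D B : Option (α × ℤ)) :
    |mergeDefect A B - mergeDefect A D - mergeDefect (D.map invSyllable) B| ≤ 3 := by
  rcases A with _ | ⟨i, a⟩
  · simpa [mergeDefect] using abs_mergeDefect_le (D.map invSyllable) B
  rcases B with _ | ⟨k, b⟩
  · simpa [mergeDefect] using abs_mergeDefect_le (some (i, a)) D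
  rcases D with _ | ⟨j, d⟩
  · simpa [mergeDefect] using abs_mergeDefect_le (some (i, a)) (some (k, b))
  simp only [Option.map_some, invSyllable]
  by_cases hij : i = j <;> by_cases hjk : j = k
  · subst hij hjk
    simp only [mergeDefect, if_true, tr_neg]
    rw [abs_le]
    constructor <;> linarith [neg_one_le_tr (a + b), tr_le_one (a + b), neg_one_le_tr (a + d),
      tr_le_one (a + d), neg_one_le_tr (-d + b), tr_le_one (-d + b)]
  · have hik : i ≠ k := hij ▸ hjk
    simpa [mergeDefect, hjk, hik] using abs_mergeDefect_le (some (i, a)) (some (j, d))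
  · have hik : i ≠ k := hjk ▸ hij
    simpa [mergeDefect, hij, hik] using abs_mergeDefect_le (some (j, -d)) (some (k, b))
  · simpa [mergeDefect, hij, hjk] using abs_mergeDefect_le (some (i, a)) (some (k, b))

theorem IsReduced.exists_append_invRev_append {u v : List (α × Bool)} (hu : IsReduced u)
    (hv : IsReduced v) : ∃ a d b, u = a ++ d ∧ v = invRev d ++ b ∧ IsReduced (a ++ b) := by
  induction v generalizing u with
  | nil => exact ⟨u, [], [], by simp, by simp, by simpa⟩
  | cons y v ih =>
    rcases List.eq_nil_or_concat' u with rfl | ⟨u, x, rfl⟩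
    · exact ⟨[], [], y :: v, by simp, by simp, by simpa⟩
    by_cases hxy : y = (x.1, !x.2)
    · obtain ⟨a, d, b, rfl, rfl, hab⟩ :=
        ih (hu.infix (List.prefix_append _ _).isInfix) (hv.infix (List.suffix_cons _ _).isInfix)
      exact ⟨a, d ++ [x], b, by simp, by simp [hxy, invRev], hab⟩
    · refine ⟨u ++ [x], [], y :: v, by simp, by simp, ?_⟩
      refine hu.append_overlap (L₃ := y :: v) (isReduced_cons_cons.mpr ⟨fun h => ?_, hv⟩)
        (List.cons_ne_nil _ _)
      by_contra hne
      exact hxy (Prod.ext h.symm (by cases hx : x.2 <;> cases hy : y.2 <;> simp_all))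

theorem exists_toWord_mul (x y : FreeGroup α) : ∃ a d b,
    x.toWord = a ++ d ∧ y.toWord = invRev d ++ b ∧ (x * y).toWord = a ++ b := by
  obtain ⟨a, d, b, hx, hy, hab⟩ :=
    (isReduced_toWord (x := x)).exists_append_invRev_append (isReduced_toWord (x := y))
  refine ⟨a, d, b, hx, hy, ?_⟩
  have : x * y = mk (a ++ b) := by
    rw [← mk_toWord (x := x), ← mk_toWord (x := y), hx, hy]
    simp only [← mul_mk, ← inv_mk]
    group
  rw [this, toWord_mk, hab.reduce_eq]

theorem abs_trSum_syllables_toWord_mul_sub_le (x y : FreeGroup α) :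
    |trSum (syllables (x * y).toWord) - trSum (syllables x.toWord) -
      trSum (syllables y.toWord)| ≤ 3 := by
  obtain ⟨a, d, b, hx, hy, hxy⟩ := exists_toWord_mul x y
  rw [hx, hy, hxy, trSum_syllables_append, trSum_syllables_append, trSum_syllables_append,
    trSum_syllables_invRev, getLast?_syllables_invRev]
  convert abs_mergeDefect_sub_le (syllables a).getLast? (syllables d).head? (syllables b).head?
    using 2
  ring

theorem trSum_syllables_toWord_inv (x : FreeGroup α) :
    trSum (syllables x⁻¹.toWord) = -trSum (syllables x.toWord) := by
  rw [toWord_inv, trSum_syllables_invRev]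

end FreeGroup

theorem abs_apply_commutator_le {G : Type*} [Group G] (φ : G → ℤ) (D : ℤ)
    (hinv : ∀ x, φ x⁻¹ = -φ x) (hmul : ∀ x y, |φ (x * y) - φ x - φ y| ≤ D) (f g : G) :
    |φ (f⁻¹ * g⁻¹ * f * g)| ≤ 3 * D := by
  have h₁ := abs_le.mp (hmul (f⁻¹ * g⁻¹ * f) g)
  have h₂ := abs_le.mp (hmul (f⁻¹ * g⁻¹) f)
  have h₃ := abs_le.mp (hmul f⁻¹ g⁻¹)
  rw [hinv, hinv] at h₃
  rw [abs_le]
  constructor <;> linarith [h₁.1, h₁.2, h₂.1, h₂.2, h₃.1, h₃.2]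

open FreeGroup

theorem ql_eq_trSum_syllables {n : ℕ} (w : FreeGroup (Fin n)) :
    ql w = trSum (syllables w.toWord) := by
  have := congrArg (fun L => (L.map tr).sum) (map_sum_splitBy_eq_map_snd_syllables w.toWord)
  simpa [ql, trSum, List.map_map, Function.comp_def] using this

theorem ql_commutator_general (n : ℕ) (f g : FreeGroup (Fin n)) :
    -9 ≤ ql (f⁻¹ * g⁻¹ * f * g) ∧ ql (f⁻¹ * g⁻¹ * f * g) ≤ 9 := by
  have h := abs_apply_commutator_le (fun w : FreeGroup (Fin n) => trSum (syllables w.toWord)) 3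
    trSum_syllables_toWord_inv abs_trSum_syllables_toWord_mul_sub_le f g
  rw [ql_eq_trSum_syllables]
  exact abs_le.mp (h.trans_eq (by norm_num))

theorem ql_commutator (n : ℕ) (hn : 2 ≤ n) (f g : FreeGroup (Fin n)) :
    -9 ≤ ql (f⁻¹ * g⁻¹ * f * g) ∧ ql (f⁻¹ * g⁻¹ * f * g) ≤ 9 :=
  ql_commutator_general n f g
end

section
/- Let K be a finite group of order l, n ≥ 2, and G = F_n ≀ K the wreath product, with Δ : G → ℤ defined by Δ((f_{k₁},…,f_{k_l})k) = Σ_{i=1}^l ql(f_{k_i}). Then for every g ∈ G: |Δ(g) + Δ(g⁻¹)| ≤ 3l. -/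
/-- The permutation action of `K` on the base group `K → H` of the wreath product
`H ≀ K`, by left translation on the index set: `(k • f) k' = f (k⁻¹ * k')`. -/
def wreathAction (H K : Type*) [Group H] [Group K] : K →* MulAut (K → H) where
  toFun k :=
    { toFun := fun f x => f (k⁻¹ * x)
      invFun := fun f x => f (k * x)
      left_inv := fun f => by funext x; simp [← mul_assoc]
      right_inv := fun f => by funext x; simp [← mul_assoc]
      map_mul' := fun f g => rfl }
  map_one' := by
    ext f x
    simp
  map_mul' := fun a b => by
    ext f x
    simp [mul_assoc]

/-- The wreath product `H ≀ K = (∏_{k ∈ K} H) ⋊ K`. -/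
abbrev WreathProduct (H K : Type*) [Group H] [Group K] :=
  SemidirectProduct (K → H) K (wreathAction H K)

/-- The quasi-homomorphism `Δ : Fₙ ≀ K → ℤ`, `Δ((f_{k₁}, …, f_{k_l})k) = Σᵢ ql(f_{kᵢ})`. -/
def Δ {n : ℕ} {K : Type*} [Group K] [Fintype K]
    (g : WreathProduct (FreeGroup (Fin n)) K) : ℤ :=
  ∑ k : K, ql (g.left k)

/-!
Inverting a reduced word reverses it and flips every letter's sign, so the syllables of `w⁻¹` are
those of `w` in reverse order with negated exponents; as `tr` is odd, `ql w⁻¹ = -ql w`. In the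
wreath product the coordinates of `g⁻¹` are the inverses of those of `g`, permuted by `g.right`,
hence `Δ g⁻¹ = -Δ g` and the left-hand side vanishes.
-/

namespace List

variable {α β : Type*}

theorem splitBy_map {r : α → α → Bool} {s : β → β → Bool} {f : α → β}
    (hf : ∀ a b, s (f a) (f b) = r a b) (l : List α) :
    (l.map f).splitBy s = (l.splitBy r).map (map f) := by
  rw [splitBy_eq_iff]
  refine ⟨by rw [← map_flatten, flatten_splitBy], by simp [nil_notMem_splitBy], ?_, ?_⟩
  · simp only [mem_map, forall_exists_index, and_imp, forall_apply_eq_imp_iff₂]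
    intro m hm
    simpa [isChain_map, hf] using isChain_of_mem_splitBy hm
  · rw [isChain_map]
    refine (isChain_getLast_head_splitBy r l).imp fun a b ⟨ha, hb, h⟩ => ?_
    exact ⟨by simpa using ha, by simpa using hb, by simpa [hf] using h⟩

theorem splitBy_reverse {r : α → α → Bool} (hr : ∀ a b, r a b = r b a) (l : List α) :
    l.reverse.splitBy r = ((l.splitBy r).map reverse).reverse := by
  rw [splitBy_eq_iff]
  refine ⟨by rw [← reverse_flatten, flatten_splitBy], by simp [nil_notMem_splitBy], ?_, ?_⟩
  · simp only [mem_reverse, mem_map, forall_exists_index, and_imp, forall_apply_eq_imp_iff₂]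
    intro m hm
    simpa [isChain_reverse, hr] using isChain_of_mem_splitBy hm
  · rw [isChain_reverse, isChain_map]
    refine (isChain_getLast_head_splitBy r l).imp fun a b ⟨ha, hb, h⟩ => ?_
    exact ⟨by simpa using hb, by simpa using ha,
      by simpa [hr, getLast_reverse, head_reverse] using h⟩

end List

theorem ql_inv {n : ℕ} (w : FreeGroup (Fin n)) : ql w⁻¹ = -ql w := by
  unfold ql
  rw [FreeGroup.toWord_inv, FreeGroup.invRev,
    List.splitBy_reverse (fun a b => by simp [eq_comm]),
    List.splitBy_map (r := fun p q => p.1 == q.1) (fun a b => rfl)]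
  set e : Fin n × Bool → ℤ := fun p => if p.2 then 1 else -1
  set flip : Fin n × Bool → Fin n × Bool := fun p => (p.1, !p.2)
  set syl : List (Fin n × Bool) → ℤ := fun s => tr (s.map e).sum
  have he : e ∘ flip = Neg.neg ∘ e := funext fun ⟨_, b⟩ => by cases b <;> rfl
  have hsyl (s : List (Fin n × Bool)) : syl (s.map flip).reverse = -syl s := by
    simp only [syl]
    rw [List.map_reverse, List.sum_reverse, List.map_map, he, ← List.map_map, ← List.sum_neg,
      tr_neg]
  rw [List.map_reverse, List.sum_reverse, List.sum_neg, List.map_map, List.map_map, List.map_map]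
  exact congrArg List.sum (List.map_congr_left fun s _ => hsyl s)

theorem WreathProduct.inv_left_apply {H K : Type*} [Group H] [Group K]
    (g : WreathProduct H K) (k : K) : g⁻¹.left k = (g.left (g.right * k))⁻¹ := by
  simp [SemidirectProduct.inv_left, wreathAction]

theorem WreathProduct.sum_inv_left {H K M : Type*} [Group H] [Group K] [Fintype K]
    [AddCommMonoid M] (φ : H → M) (g : WreathProduct H K) :
    ∑ k, φ (g⁻¹.left k) = ∑ k, φ (g.left k)⁻¹ := by
  simp only [inv_left_apply]
  exact Fintype.sum_equiv (Equiv.mulLeft g.right) _ _ fun _ => rfl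

theorem Δ_inv {n : ℕ} {K : Type*} [Group K] [Fintype K]
    (g : WreathProduct (FreeGroup (Fin n)) K) : Δ g⁻¹ = -Δ g := by
  rw [Δ, Δ, WreathProduct.sum_inv_left, ← Finset.sum_neg_distrib]
  simp only [ql_inv]

theorem delta_inv_general (n : ℕ) (K : Type*) [Group K] [Fintype K]
    (g : WreathProduct (FreeGroup (Fin n)) K) :
    |Δ g + Δ g⁻¹| ≤ 3 * (Fintype.card K : ℤ) := by
  rw [Δ_inv, add_neg_cancel, abs_zero]
  positivity

/-- For every `g ∈ Fₙ ≀ K`: `|Δ(g) + Δ(g⁻¹)| ≤ 3l`, where `l = |K|`. -/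
theorem delta_inv (n : ℕ) (hn : 2 ≤ n) (K : Type*) [Group K] [Fintype K]
    (g : WreathProduct (FreeGroup (Fin n)) K) :
    |Δ g + Δ g⁻¹| ≤ 3 * (Fintype.card K : ℤ) :=
  delta_inv_general n K g
end

section
/- Let F_2 be the free group with basis x_1, x_2 and let ql : F_2 → ℤ be defined on reduced syllable forms by ql(x_{i₁}^{α₁}⋯x_{i_t}^{α_t}) = Σ_{j=1}^t tr(α_j). Then for every integer j ≥ 1, the element a_j = x_2^{-3j} x_1^{-3j} (x_2 x_1)^{3j} lies in the commutator subgroup of F_2 and satisfies ql(a_j) = 6j. In particular, ql is unbounded on the commutator subgroup of F_2. -/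
/-- `a j = x₂^{-3j} x₁^{-3j} (x₂ x₁)^{3j}` in the free group `F₂` on `x₁ = of 0`,
`x₂ = of 1`. -/
def aElt (j : ℕ) : FreeGroup (Fin 2) :=
  (FreeGroup.of 1) ^ (-(3 * (j : ℤ))) * (FreeGroup.of 0) ^ (-(3 * (j : ℤ))) *
    (FreeGroup.of 1 * FreeGroup.of 0) ^ (3 * (j : ℤ))

/-!
Writing an element of `F_2` as a product of syllables `x_i ^ k` with nonzero exponents and
alternating generators, the concatenated word is reduced and its splitting into maximal blocks of
equal letters recovers the syllables, so `ql` is the sum of `tr k` over the syllables. The element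
`a_j` has the syllables `x_2^{-3j}, x_1^{-3j}` followed by `3j` copies of `x_2, x_1`, giving
`ql a_j = 0 + 0 + 6j`; it maps to `1` in the abelianization, hence lies in the commutator subgroup.
-/

lemma List.isChain_flatten_replicate_pair {α : Type*} {R : α → α → Prop} {a b : α}
    (hab : R a b) (hba : R b a) (n : ℕ) : (List.replicate n [a, b]).flatten.IsChain R := by
  rw [List.isChain_flatten (by simp)]
  exact ⟨by simp [hab], List.isChain_replicate_of_rel _ (by simpa using hba)⟩

lemma tr_eq_zero_of_dvd {m : ℤ} (h : 3 ∣ m) : tr m = 0 := by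
  rw [tr, if_pos (Int.emod_eq_zero_of_dvd h)]

lemma zpow_neg_mul_zpow_neg_mul_mul_zpow_mem_commutator {G : Type*} [Group G] (x y : G) (k : ℤ) :
    y ^ (-k) * x ^ (-k) * (y * x) ^ k ∈ commutator G := by
  rw [← Abelianization.ker_of, MonoidHom.mem_ker, map_mul, map_mul, map_zpow, map_zpow, map_zpow,
    map_mul, mul_zpow, mul_comm (Abelianization.of y ^ k)]
  group

section Syllables

open FreeGroup (mk of mul_mk)

variable {α : Type*}

def syllableWord (s : α × ℤ) : List (α × Bool) := List.replicate s.2.natAbs (s.1, 0 ≤ s.2)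

def ofSyllables (S : List (α × ℤ)) : FreeGroup α := (S.map fun s => of s.1 ^ s.2).prod

lemma mk_syllableWord (s : α × ℤ) : mk (syllableWord s) = of s.1 ^ s.2 := by
  obtain ⟨i, _ | n⟩ := s
  · simp [syllableWord, FreeGroup.of, FreeGroup.pow_mk]
  · simp [syllableWord, FreeGroup.of, FreeGroup.pow_mk, zpow_negSucc, FreeGroup.inv_mk,
      FreeGroup.invRev]

lemma ofSyllables_eq_mk (S : List (α × ℤ)) : ofSyllables S = mk (S.map syllableWord).flatten := by
  induction S with
  | nil => rfl
  | cons s S ih =>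
    rw [ofSyllables, List.map_cons, List.prod_cons, ← ofSyllables, ih, ← mk_syllableWord, mul_mk]
    rfl

lemma fst_of_mem_syllableWord {s : α × ℤ} {x : α × Bool} (hx : x ∈ syllableWord s) :
    x.1 = s.1 := by
  rw [List.eq_of_mem_replicate hx]

lemma syllableWord_ne_nil {s : α × ℤ} (hs : s.2 ≠ 0) : syllableWord s ≠ [] := by
  simpa [syllableWord] using hs

lemma sum_map_sign_syllableWord (s : α × ℤ) :
    ((syllableWord s).map fun p => if p.2 then (1 : ℤ) else -1).sum = s.2 := by
  rcases le_or_gt 0 s.2 with hs | hs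
  · simp [syllableWord, hs, abs_of_nonneg]
  · simp [syllableWord, hs.not_ge, abs_of_neg hs]

variable {S : List (α × ℤ)}

lemma nil_notMem_map_syllableWord (h0 : ∀ s ∈ S, s.2 ≠ 0) : [] ∉ S.map syllableWord := by
  simpa using fun s hs => syllableWord_ne_nil (h0 s hs)

lemma isReduced_flatten_syllableWord (h0 : ∀ s ∈ S, s.2 ≠ 0)
    (hS : S.IsChain fun s t => s.1 ≠ t.1) : FreeGroup.IsReduced (S.map syllableWord).flatten := by
  rw [FreeGroup.IsReduced, List.isChain_flatten (nil_notMem_map_syllableWord h0), List.isChain_map]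
  refine ⟨fun w hw => ?_, hS.imp fun s t hst x hx y hy hxy => ?_⟩
  · obtain ⟨s, -, rfl⟩ := List.mem_map.1 hw
    exact List.isChain_replicate_of_rel _ fun _ => rfl
  · rw [fst_of_mem_syllableWord (List.mem_of_mem_getLast? hx),
      fst_of_mem_syllableWord (List.mem_of_mem_head? hy)] at hxy
    exact absurd hxy hst

lemma splitBy_flatten_syllableWord [DecidableEq α] (h0 : ∀ s ∈ S, s.2 ≠ 0)
    (hS : S.IsChain fun s t => s.1 ≠ t.1) :
    (S.map syllableWord).flatten.splitBy (fun p q => p.1 == q.1) = S.map syllableWord := by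
  refine List.splitBy_flatten (nil_notMem_map_syllableWord h0) (fun w hw => ?_) ?_
  · obtain ⟨s, -, rfl⟩ := List.mem_map.1 hw
    exact List.isChain_replicate_of_rel _ (beq_self_eq_true _)
  · rw [List.isChain_map]
    refine hS.imp_of_mem_imp fun s t hs ht hst => ⟨syllableWord_ne_nil (h0 s hs),
      syllableWord_ne_nil (h0 t ht), ?_⟩
    rw [fst_of_mem_syllableWord (List.getLast_mem _), fst_of_mem_syllableWord (List.head_mem _)]
    exact beq_false_of_ne hst

end Syllables

lemma ql_ofSyllables {n : ℕ} {S : List (Fin n × ℤ)} (h0 : ∀ s ∈ S, s.2 ≠ 0)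
    (hS : S.IsChain fun s t => s.1 ≠ t.1) : ql (ofSyllables S) = (S.map fun s => tr s.2).sum := by
  rw [ql, ofSyllables_eq_mk, FreeGroup.toWord_mk, (isReduced_flatten_syllableWord h0 hS).reduce_eq,
    splitBy_flatten_syllableWord h0 hS, List.map_map]
  simp_rw [Function.comp_def, sum_map_sign_syllableWord]

/-- The syllables of `x₂^{-m} x₁^{-m} (x₂ x₁)^m`. -/
def aSyllables (m : ℕ) : List (Fin 2 × ℤ) :=
  (1, -(m : ℤ)) :: (0, -(m : ℤ)) :: (List.replicate m [(1, 1), (0, 1)]).flatten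

lemma aElt_eq_ofSyllables (j : ℕ) : aElt j = ofSyllables (aSyllables (3 * j)) := by
  simp only [aElt, aSyllables, ofSyllables, List.map_cons, List.prod_cons, List.map_flatten,
    List.map_replicate, List.prod_flatten, List.prod_replicate, List.map_nil, List.prod_nil,
    mul_one, mul_assoc, Nat.cast_mul, Nat.cast_ofNat, zpow_one, ← zpow_natCast]

lemma aSyllables_ne_zero {m : ℕ} (hm : m ≠ 0) : ∀ s ∈ aSyllables m, s.2 ≠ 0 := by
  simp [aSyllables, hm]

lemma isChain_aSyllables (m : ℕ) : (aSyllables m).IsChain fun s t => s.1 ≠ t.1 := by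
  have hfst : (aSyllables m).map Prod.fst = (List.replicate (m + 1) [1, 0]).flatten := by
    simp [aSyllables, List.map_flatten, List.replicate_succ]
  rw [← List.isChain_map Prod.fst (R := (· ≠ ·)), hfst]
  exact List.isChain_flatten_replicate_pair (by decide) (by decide) _

lemma ql_aElt {j : ℕ} (hj : 1 ≤ j) : ql (aElt j) = 6 * (j : ℤ) := by
  rw [aElt_eq_ofSyllables, ql_ofSyllables (aSyllables_ne_zero (by omega)) (isChain_aSyllables _)]
  have htr : tr 1 = 1 := by norm_num [tr]
  simp [aSyllables, List.map_flatten, List.sum_flatten, tr_eq_zero_of_dvd, htr]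
  ring

lemma aElt_mem_commutator (j : ℕ) : aElt j ∈ commutator (FreeGroup (Fin 2)) :=
  zpow_neg_mul_zpow_neg_mul_mul_zpow_mem_commutator _ _ _

theorem ql_unbounded_on_commutator :
    (∀ j : ℕ, 1 ≤ j →
      aElt j ∈ commutator (FreeGroup (Fin 2)) ∧ ql (aElt j) = 6 * (j : ℤ)) ∧
    ∀ C : ℤ, ∃ w ∈ commutator (FreeGroup (Fin 2)), C < ql w := by
  refine ⟨fun j hj => ⟨aElt_mem_commutator j, ql_aElt hj⟩, fun C => ?_⟩
  refine ⟨aElt (C.toNat + 1), aElt_mem_commutator _, ?_⟩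
  rw [ql_aElt (by omega)]
  omega
end

section
/- Let K be a finite group and F_n a free group of rank n ≥ 2. Then the commutator width of the wreath product F_n ≀ K is infinite; that is, for every m ∈ ℕ there exists an element g of the derived subgroup of F_n ≀ K that is not a product of m commutators. -/
/- ### Auxiliary development: a Brooks-type counting quasimorphism on the free group,
its extension to the wreath product, and the resulting lower bounds on commutator length. -/

namespace CWAux

variable {α : Type*} [DecidableEq α]

/-- local pair-weight: `+1` for the adjacent pair `u⁺ v⁺`, `−1` for `v⁻ u⁻`. -/
def d (u v : α) (x y : α × Bool) : ℤ :=
  (if x = (u, true) ∧ y = (v, true) then 1 else 0)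
    - (if x = (v, false) ∧ y = (u, false) then 1 else 0)

lemma abs_d_le (u v : α) (x y : α × Bool) : |d u v x y| ≤ 1 := by
  unfold d; split_ifs <;> simp

lemma d_inv (u v : α) (x y : α × Bool) :
    d u v (y.1, !y.2) (x.1, !x.2) = - d u v x y := by
  obtain ⟨a, b⟩ := x; obtain ⟨c, e⟩ := y
  unfold d
  by_cases h1 : a = u <;> by_cases h2 : a = v <;> by_cases h3 : c = u <;> by_cases h4 : c = v <;>
    cases b <;> cases e <;> simp_all

/-- counting function on words: the number of adjacent `u⁺v⁺` pairs minus `v⁻u⁻` pairs. -/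
def cnt (u v : α) : List (α × Bool) → ℤ
  | [] => 0
  | [_] => 0
  | x :: y :: L => d u v x y + cnt u v (y :: L)

/-- boundary correction term for `cnt` of an append. -/
def bd (u v : α) (L M : List (α × Bool)) : ℤ :=
  match L.getLast?, M.head? with
  | some x, some y => d u v x y
  | _, _ => 0

lemma abs_bd_le (u v : α) (L M : List (α × Bool)) : |bd u v L M| ≤ 1 := by
  unfold bd
  rcases L.getLast? with _ | x <;> rcases M.head? with _ | y <;> simp [abs_d_le]

lemma cnt_append (u v : α) : ∀ L M : List (α × Bool),
    cnt u v (L ++ M) = cnt u v L + cnt u v M + bd u v L M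
  | [], M => by simp [cnt, bd]
  | [x], M => by
      rcases M with _ | ⟨y, M'⟩
      · simp [cnt, bd]
      · simp [cnt, bd, add_comm]
  | x :: y :: L, M => by
      have ih := cnt_append u v (y :: L) M
      have hbd : bd u v (x :: y :: L) M = bd u v (y :: L) M := by
        unfold bd; rw [List.getLast?_cons_cons]
      have h1 : cnt u v ((x :: y :: L) ++ M) = d u v x y + cnt u v ((y :: L) ++ M) := rfl
      have h2 : cnt u v (x :: y :: L) = d u v x y + cnt u v (y :: L) := rfl
      rw [h1, ih, hbd, h2]; ring

omit [DecidableEq α] in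
lemma invRev_cons (x : α × Bool) (L : List (α × Bool)) :
    FreeGroup.invRev (x :: L) = FreeGroup.invRev L ++ [(x.1, !x.2)] := by
  simp [FreeGroup.invRev]

lemma cnt_invRev (u v : α) : ∀ L : List (α × Bool),
    cnt u v (FreeGroup.invRev L) = - cnt u v L
  | [] => by simp [cnt, FreeGroup.invRev]
  | [x] => by
      rw [invRev_cons]
      simp [cnt, FreeGroup.invRev]
  | x :: y :: L => by
      have ih := cnt_invRev u v (y :: L)
      rw [invRev_cons, cnt_append, ih]
      have hbd : bd u v (FreeGroup.invRev (y :: L)) [(x.1, !x.2)] =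
          d u v (y.1, !y.2) (x.1, !x.2) := by
        unfold bd
        rw [invRev_cons]
        simp
      rw [hbd, d_inv]
      have h2 : cnt u v (x :: y :: L) = d u v x y + cnt u v (y :: L) := rfl
      have h3 : cnt u v [(x.1, !x.2)] = 0 := rfl
      rw [h2, h3]; ring

/-- no cancellation between consecutive letters. -/
def R (x y : α × Bool) : Prop := ¬(x.1 = y.1 ∧ x.2 = !y.2)

lemma reduce_eq_self_of_chain' :
    ∀ L : List (α × Bool), List.Chain' R L → FreeGroup.reduce L = L
  | [], _ => rfl
  | [_], _ => rfl
  | x :: y :: L, h => by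
      have hxy : R x y := (List.isChain_cons_cons.mp h).1
      have ih : FreeGroup.reduce (y :: L) = y :: L :=
        reduce_eq_self_of_chain' (y :: L) (List.isChain_cons_cons.mp h).2
      rw [FreeGroup.reduce.cons, ih]
      show (if x.1 = y.1 ∧ x.2 = !y.2 then L else x :: y :: L) = x :: y :: L
      rw [if_neg hxy]

omit [DecidableEq α] in
lemma exists_cancel_of_not_chain' :
    ∀ L : List (α × Bool), ¬ List.Chain' R L →
      ∃ (A : List (α × Bool)) (z : α) (b : Bool) (B : List (α × Bool)),
        L = A ++ (z, b) :: (z, !b) :: B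
  | [], h => absurd List.isChain_nil h
  | x :: L', h => by
      by_cases hL' : List.Chain' R L'
      · rcases L' with _ | ⟨y, L''⟩
        · exact absurd (List.isChain_singleton x) h
        · by_cases hxy : R x y
          · exact absurd (List.isChain_cons_cons.mpr ⟨hxy, hL'⟩) h
          · rw [R, not_not] at hxy
            refine ⟨[], x.1, x.2, L'', ?_⟩
            have : y = (x.1, !x.2) := by
              obtain ⟨h1, h2⟩ := hxy
              obtain ⟨y1, y2⟩ := y
              simp_all
            simp [this]
      · obtain ⟨A, z, b, B, hB⟩ := exists_cancel_of_not_chain' L' hL'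
        exact ⟨x :: A, z, b, B, by simp [hB]⟩

lemma chain'_of_reduce_eq (L : List (α × Bool))
    (h : FreeGroup.reduce L = L) : List.Chain' R L := by
  by_contra hc
  obtain ⟨A, z, b, B, hB⟩ := exists_cancel_of_not_chain' L hc
  rw [hB] at h
  exact FreeGroup.reduce.not h

/-- Key decomposition: the reduction of a concatenation of two reduced words. -/
lemma reduce_append (L2 : List (α × Bool)) (h2 : FreeGroup.reduce L2 = L2) :
    ∀ L1, List.Chain' R L1 →
      ∃ a c b, L1 = a ++ c ∧ L2 = FreeGroup.invRev c ++ b ∧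
        FreeGroup.reduce (L1 ++ L2) = a ++ b
  | [], _ => ⟨[], [], L2, rfl, by simp [FreeGroup.invRev], by simpa⟩
  | x :: L1', h => by
      obtain ⟨a', c', b', h1, hl2, hr⟩ := reduce_append L2 h2 L1' h.tail
      rcases a' with _ | ⟨y, a''⟩
      · simp only [List.nil_append] at h1 hr
        rcases b' with _ | ⟨z, b''⟩
        · refine ⟨[x], c', [], by rw [h1]; rfl, by simpa using hl2, ?_⟩
          have : FreeGroup.reduce ((x :: L1') ++ L2) = FreeGroup.reduce (x :: (L1' ++ L2)) := rfl
          rw [this, FreeGroup.reduce.cons, hr]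
          rfl
        · by_cases hc : x.1 = z.1 ∧ x.2 = !z.2
          · refine ⟨[], x :: c', b'', by rw [h1]; rfl, ?_, ?_⟩
            · rw [hl2]
              have hz : z = (x.1, !x.2) := by
                obtain ⟨hz1, hz2⟩ := hc
                obtain ⟨z1, z2⟩ := z
                simp_all
              rw [invRev_cons, hz]
              simp
            · have : FreeGroup.reduce ((x :: L1') ++ L2)
                  = FreeGroup.reduce (x :: (L1' ++ L2)) := rfl
              rw [this, FreeGroup.reduce.cons, hr]
              show (if x.1 = z.1 ∧ x.2 = !z.2 then b'' else x :: z :: b'') = [] ++ b''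
              rw [if_pos hc]
              rfl
          · refine ⟨[x], c', z :: b'', by rw [h1]; rfl, hl2, ?_⟩
            have : FreeGroup.reduce ((x :: L1') ++ L2) = FreeGroup.reduce (x :: (L1' ++ L2)) := rfl
            rw [this, FreeGroup.reduce.cons, hr]
            show (if x.1 = z.1 ∧ x.2 = !z.2 then b'' else x :: z :: b'') = [x] ++ z :: b''
            rw [if_neg hc]
            rfl
      · have hxy : R x y := by
          rw [h1] at h
          exact (List.isChain_cons_cons.mp h).1
        refine ⟨x :: y :: a'', c', b', by rw [h1]; rfl, hl2, ?_⟩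
        have : FreeGroup.reduce ((x :: L1') ++ L2) = FreeGroup.reduce (x :: (L1' ++ L2)) := rfl
        rw [this, FreeGroup.reduce.cons, hr]
        show (if x.1 = y.1 ∧ x.2 = !y.2 then a'' ++ b' else x :: y :: (a'' ++ b'))
          = (x :: y :: a'') ++ b'
        rw [if_neg hxy]
        rfl

/-! ### The quasimorphism `psi` on the free group -/

/-- The Brooks-type counting quasimorphism. -/
def psi (u v : α) (w : FreeGroup α) : ℤ := cnt u v w.toWord

lemma psi_one (u v : α) : psi u v 1 = 0 := by
  rw [psi, FreeGroup.toWord_one]; rfl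

lemma psi_inv (u v : α) (w : FreeGroup α) : psi u v w⁻¹ = - psi u v w := by
  rw [psi, FreeGroup.toWord_inv, cnt_invRev]; rfl

lemma abs_psi_mul_le (u v : α) (w1 w2 : FreeGroup α) :
    |psi u v (w1 * w2) - psi u v w1 - psi u v w2| ≤ 3 := by
  have hch1 : List.Chain' R w1.toWord :=
    chain'_of_reduce_eq _ (FreeGroup.reduce_toWord w1)
  obtain ⟨a, c, b, ha, hb, hred⟩ :=
    reduce_append w2.toWord (FreeGroup.reduce_toWord w2) w1.toWord hch1
  have hw : (w1 * w2).toWord = a ++ b := by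
    have h0 : w1 * w2 = FreeGroup.mk (w1.toWord ++ w2.toWord) := by
      rw [← FreeGroup.mul_mk, FreeGroup.mk_toWord, FreeGroup.mk_toWord]
    rw [h0, FreeGroup.toWord_mk, hred]
  have e : psi u v (w1 * w2) - psi u v w1 - psi u v w2
      = bd u v a b - bd u v a c - bd u v (FreeGroup.invRev c) b := by
    simp only [psi]
    rw [hw, ha, hb, cnt_append, cnt_append, cnt_append, cnt_invRev]
    ring
  rw [e]
  have h1 := abs_le.mp (abs_bd_le u v a b)
  have h2 := abs_le.mp (abs_bd_le u v a c)
  have h3 := abs_le.mp (abs_bd_le u v (FreeGroup.invRev c) b)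
  rw [abs_le]
  constructor <;> omega

/-! ### The explicit word `(uv)^N u^{-N} v^{-N}` -/

/-- the positive alternating block `(uv)^N`. -/
def ab (u v : α) : ℕ → List (α × Bool)
  | 0 => []
  | N + 1 => (u, true) :: (v, true) :: ab u v N

omit [DecidableEq α] in
lemma ab_succ (u v : α) (N : ℕ) :
    ab u v (N + 1) = [(u, true), (v, true)] ++ ab u v N := rfl

omit [DecidableEq α] in
lemma head?_ab (u v : α) (N : ℕ) (hN : N ≠ 0) : (ab u v N).head? = some (u, true) := by
  cases N with
  | zero => omega
  | succ N => rfl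

omit [DecidableEq α] in
lemma getLast?_ab (u v : α) (N : ℕ) (hN : N ≠ 0) :
    (ab u v N).getLast? = some (v, true) := by
  induction N with
  | zero => omega
  | succ N ih =>
      cases N with
      | zero => rfl
      | succ M =>
          rw [ab_succ, List.getLast?_append]
          rw [ih (by omega)]
          simp

lemma cnt_ab (u v : α) (huv : u ≠ v) (N : ℕ) : cnt u v (ab u v N) = N := by
  induction N with
  | zero => rfl
  | succ N ih =>
      rw [ab_succ, cnt_append, ih]
      have h1 : cnt u v [(u, true), (v, true)] = 1 := by
        show d u v (u, true) (v, true) + 0 = 1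
        simp [d]
      have h2 : bd u v [(u, true), (v, true)] (ab u v N) = 0 := by
        unfold bd
        cases N with
        | zero => simp [ab]
        | succ M =>
            rw [head?_ab u v (M + 1) (by omega)]
            simp [d, huv.symm]
      rw [h1, h2]
      push_cast
      ring

omit [DecidableEq α] in
lemma chain'_ab (u v : α) (huv : u ≠ v) (N : ℕ) : List.Chain' R (ab u v N) := by
  induction N with
  | zero => exact List.isChain_nil
  | succ N ih =>
      rw [ab_succ, List.Chain', List.isChain_append]
      refine ⟨?_, ih, ?_⟩
      · exact List.isChain_pair.mpr (by simp [R, huv])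
      · intro x hx y hy
        simp at hx
        subst hx
        cases N with
        | zero => simp [ab] at hy
        | succ M =>
            rw [head?_ab u v (M + 1) (by omega)] at hy
            simp at hy
            subst hy
            simp [R, huv.symm]

lemma cnt_replicate (u v : α) (x : α × Bool) (hx : d u v x x = 0) (N : ℕ) :
    cnt u v (List.replicate N x) = 0 := by
  induction N with
  | zero => rfl
  | succ N ih =>
      have h0 : List.replicate (N + 1) x = [x] ++ List.replicate N x := by
        simp [List.replicate_succ]
      rw [h0, cnt_append, ih]
      have h1 : cnt u v [x] = 0 := rfl
      have h2 : bd u v [x] (List.replicate N x) = 0 := by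
        unfold bd
        cases N with
        | zero => simp
        | succ M => simp [List.replicate_succ, hx]
      rw [h1, h2]
      ring

omit [DecidableEq α] in
lemma getLast?_replicate (x : α × Bool) (N : ℕ) (hN : N ≠ 0) :
    (List.replicate N x).getLast? = some x := by
  cases N with
  | zero => omega
  | succ M => rw [List.replicate_succ', List.getLast?_concat]

omit [DecidableEq α] in
lemma head?_replicate' (x : α × Bool) (N : ℕ) (hN : N ≠ 0) :
    (List.replicate N x).head? = some x := by
  cases N with
  | zero => omega
  | succ M => simp [List.replicate_succ]

/-- The word `(uv)^N u^{-N} v^{-N}`. -/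
def LW (u v : α) (N : ℕ) : List (α × Bool) :=
  ab u v N ++ (List.replicate N (u, false) ++ List.replicate N (v, false))

omit [DecidableEq α] in
lemma chain'_replicate (x : α × Bool) (N : ℕ) : List.Chain' R (List.replicate N x) :=
  List.isChain_replicate_of_rel N (by simp [R])

omit [DecidableEq α] in
lemma chain'_LW (u v : α) (huv : u ≠ v) (N : ℕ) : List.Chain' R (LW u v N) := by
  rcases Nat.eq_zero_or_pos N with hN | hN
  · subst hN
    simp [LW, ab, List.Chain']
  rw [LW, List.Chain', List.isChain_append]
  refine ⟨chain'_ab u v huv N, ?_, ?_⟩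
  · rw [List.isChain_append]
    refine ⟨chain'_replicate _ _, chain'_replicate _ _, ?_⟩
    intro x hx y hy
    rw [getLast?_replicate _ _ (by omega)] at hx
    rw [head?_replicate' _ _ (by omega)] at hy
    simp at hx hy
    subst hx; subst hy
    simp [R, huv, huv.symm]
  · intro x hx y hy
    rw [getLast?_ab u v N (by omega)] at hx
    rw [List.head?_append, head?_replicate' _ _ (by omega)] at hy
    simp at hx hy
    subst hx; subst hy
    simp [R, huv.symm]

lemma cnt_LW (u v : α) (huv : u ≠ v) (N : ℕ) : cnt u v (LW u v N) = N := by
  rcases Nat.eq_zero_or_pos N with hN | hN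
  · subst hN
    rfl
  have hdu : d u v (u, false) (u, false) = 0 := by simp [d, huv, huv.symm]
  have hdv : d u v (v, false) (v, false) = 0 := by simp [d, huv, huv.symm]
  rw [LW, cnt_append, cnt_append, cnt_ab u v huv,
    cnt_replicate u v _ hdu, cnt_replicate u v _ hdv]
  have h1 : bd u v (List.replicate N (u, false)) (List.replicate N (v, false)) = 0 := by
    unfold bd
    rw [getLast?_replicate _ _ (by omega), head?_replicate' _ _ (by omega)]
    simp [d, huv, huv.symm]
  have h2 : bd u v (ab u v N) (List.replicate N (u, false) ++ List.replicate N (v, false)) = 0 := by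
    unfold bd
    rw [getLast?_ab u v N (by omega), List.head?_append, head?_replicate' _ _ (by omega)]
    simp [d, huv, huv.symm]
  rw [h1, h2]
  ring

/-- The group element `(uv)^N u^{-N} v^{-N}` of the free group. -/
def wN (u v : α) (N : ℕ) : FreeGroup α := FreeGroup.mk (LW u v N)

lemma mk_ab (u v : α) (N : ℕ) :
    FreeGroup.mk (ab u v N) = (FreeGroup.of u * FreeGroup.of v) ^ N := by
  induction N with
  | zero => rfl
  | succ N ih =>
      rw [ab_succ, ← FreeGroup.mul_mk, ih, pow_succ']
      congr 1

lemma mk_rep (a : α) (N : ℕ) :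
    FreeGroup.mk (List.replicate N (a, false)) = ((FreeGroup.of a)⁻¹) ^ N := by
  induction N with
  | zero => rfl
  | succ N ih =>
      have h0 : List.replicate (N + 1) (a, false)
          = [(a, false)] ++ List.replicate N (a, false) := by
        simp [List.replicate_succ]
      rw [h0, ← FreeGroup.mul_mk, ih, pow_succ']
      congr 1

lemma wN_eq (u v : α) (N : ℕ) :
    wN u v N = (FreeGroup.of u * FreeGroup.of v) ^ N *
      (((FreeGroup.of u)⁻¹) ^ N * ((FreeGroup.of v)⁻¹) ^ N) := by
  rw [wN, LW, ← FreeGroup.mul_mk, ← FreeGroup.mul_mk, mk_ab, mk_rep, mk_rep]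

lemma wN_mem_commutator (u v : α) (N : ℕ) : wN u v N ∈ commutator (FreeGroup α) := by
  have h : Abelianization.of (wN u v N) = 1 := by
    rw [wN_eq]
    rw [map_mul, map_mul, map_pow, map_pow, map_pow, map_mul, map_inv, map_inv]
    rw [mul_pow, inv_pow, inv_pow]
    rw [mul_comm (Abelianization.of (FreeGroup.of u) ^ N)]
    group
  exact (QuotientGroup.eq_one_iff (N := commutator (FreeGroup α)) _).mp h

lemma psi_wN (u v : α) (huv : u ≠ v) (N : ℕ) : psi u v (wN u v N) = N := by
  rw [psi, wN, FreeGroup.toWord_mk, reduce_eq_self_of_chain' _ (chain'_LW u v huv N),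
    cnt_LW u v huv N]

/-! ### The quasimorphism on the wreath product -/

variable {K : Type*} [Group K] [Fintype K]

/-- The quasimorphism on the wreath product. -/
def Psi (u v : α) (g : WreathProduct (FreeGroup α) K) : ℤ :=
  ∑ k : K, psi u v (g.left k)

lemma Psi_inv (u v : α) (g : WreathProduct (FreeGroup α) K) : Psi u v g⁻¹ = - Psi u v g := by
  have hleft : ∀ k : K, g⁻¹.left k = (g.left (g.right * k))⁻¹ := by
    intro k
    rw [SemidirectProduct.inv_left]
    show (g.left⁻¹) ((g.right⁻¹)⁻¹ * k) = _
    rw [inv_inv]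
    rfl
  rw [Psi, Psi]
  rw [← Equiv.sum_comp (Equiv.mulLeft g.right) (fun k => psi u v (g.left k))]
  rw [← Finset.sum_neg_distrib]
  refine Finset.sum_congr rfl fun k _ => ?_
  rw [hleft k, psi_inv]
  rfl

lemma abs_Psi_mul_le (u v : α) (a b : WreathProduct (FreeGroup α) K) :
    |Psi u v (a * b) - Psi u v a - Psi u v b| ≤ 3 * Fintype.card K := by
  have hleft : ∀ k : K, (a * b).left k = a.left k * b.left (a.right⁻¹ * k) := fun k => rfl
  have hsum : Psi u v b = ∑ k : K, psi u v (b.left (a.right⁻¹ * k)) := by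
    rw [Psi, ← Equiv.sum_comp (Equiv.mulLeft a.right⁻¹) (fun k => psi u v (b.left k))]
    rfl
  have e : Psi u v (a * b) - Psi u v a - Psi u v b
      = ∑ k : K, (psi u v (a.left k * b.left (a.right⁻¹ * k))
          - psi u v (a.left k) - psi u v (b.left (a.right⁻¹ * k))) := by
    rw [Psi, Psi, hsum]
    rw [Finset.sum_sub_distrib, Finset.sum_sub_distrib]
    refine congrArg₂ _ (congrArg₂ _ ?_ rfl) rfl
    exact Finset.sum_congr rfl fun k _ => by rw [hleft k]
  rw [e]
  calc |∑ k : K, (psi u v (a.left k * b.left (a.right⁻¹ * k))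
          - psi u v (a.left k) - psi u v (b.left (a.right⁻¹ * k)))|
      ≤ ∑ k : K, |psi u v (a.left k * b.left (a.right⁻¹ * k))
          - psi u v (a.left k) - psi u v (b.left (a.right⁻¹ * k))| :=
        Finset.abs_sum_le_sum_abs _ _
    _ ≤ ∑ _k : K, 3 := Finset.sum_le_sum fun k _ => abs_psi_mul_le u v _ _
    _ = 3 * Fintype.card K := by
        rw [Finset.sum_const]
        simp [mul_comm]

lemma Psi_one (u v : α) : Psi u v (1 : WreathProduct (FreeGroup α) K) = 0 := by
  rw [Psi]
  refine Finset.sum_eq_zero fun k _ => ?_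
  show psi u v ((1 : K → FreeGroup α) k) = 0
  exact psi_one u v

lemma abs_Psi_list_prod (u v : α) (l : List (WreathProduct (FreeGroup α) K)) :
    |Psi u v l.prod - (l.map (Psi u v)).sum| ≤ 3 * Fintype.card K * l.length := by
  induction l with
  | nil => simp [Psi_one]
  | cons x l ih =>
      have h1 := abs_Psi_mul_le u v x l.prod
      rw [List.prod_cons, List.map_cons, List.sum_cons, List.length_cons]
      have h2 := abs_le.mp h1
      have h3 := abs_le.mp ih
      rw [abs_le]
      push_cast
      constructor <;> nlinarith [Fintype.card_pos (α := K)]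

end CWAux

/-- Theorem 4: for `K` a finite group and `n ≥ 2`, the commutator width of `Fₙ ≀ K` is
infinite: for every `m` there is an element of the derived subgroup which is not a
product of `m` commutators. -/
theorem commutatorWidth_wreath_infinite (n : ℕ) (hn : 2 ≤ n)
    (K : Type*) [Group K] [Finite K] (m : ℕ) :
    ∃ g ∈ commutator (WreathProduct (FreeGroup (Fin n)) K),
      ¬ ∃ a b : Fin m → WreathProduct (FreeGroup (Fin n)) K,
        g = (List.ofFn fun i => (a i)⁻¹ * (b i)⁻¹ * a i * b i).prod := by
  classical
  cases nonempty_fintype K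
  set u : Fin n := ⟨0, by omega⟩
  set v : Fin n := ⟨1, by omega⟩
  have huv : u ≠ v := by
    intro h
    have : (0 : ℕ) = 1 := congrArg Fin.val h
    omega
  set G := WreathProduct (FreeGroup (Fin n)) K
  set D : ℤ := 3 * Fintype.card K with hD
  have hDpos : 0 < D := by positivity
  set N : ℕ := (15 * Fintype.card K * m + 1) with hN
  -- the candidate element
  set φ : FreeGroup (Fin n) →* G :=
    SemidirectProduct.inl.comp (MonoidHom.mulSingle (fun _ : K => FreeGroup (Fin n)) 1) with hφ
  set g : G := φ (CWAux.wN u v N) with hg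
  refine ⟨g, ?_, ?_⟩
  · -- membership in the commutator subgroup
    have h1 : g ∈ Subgroup.map φ (commutator (FreeGroup (Fin n))) :=
      ⟨CWAux.wN u v N, CWAux.wN_mem_commutator u v N, rfl⟩
    have h2 : Subgroup.map φ (commutator (FreeGroup (Fin n))) ≤ commutator G := by
      rw [commutator_def, Subgroup.map_commutator, commutator_def]
      exact Subgroup.commutator_mono le_top le_top
    exact h2 h1
  · -- not a product of `m` commutators
    rintro ⟨a, b, hab⟩
    -- compute Psi of g
    have hPsig : CWAux.Psi u v g = N := by
      rw [CWAux.Psi, hg]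
      have hleft : ∀ k : K, (φ (CWAux.wN u v N)).left k
          = if k = 1 then CWAux.wN u v N else 1 := by
        intro k
        show (MonoidHom.mulSingle (fun _ : K => FreeGroup (Fin n)) 1 (CWAux.wN u v N)) k = _
        rw [MonoidHom.mulSingle_apply, Pi.mulSingle_apply]
      have : ∀ k : K, CWAux.psi u v ((φ (CWAux.wN u v N)).left k)
          = if k = 1 then (N : ℤ) else 0 := by
        intro k
        rw [hleft k]
        split_ifs with h
        · exact CWAux.psi_wN u v huv N
        · exact CWAux.psi_one u v
      rw [Finset.sum_congr rfl fun k _ => this k]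
      simp
    -- bound Psi of a product of m commutators
    set l : List G := List.ofFn fun i => (a i)⁻¹ * (b i)⁻¹ * a i * b i with hl
    have hlen : l.length = m := by simp [hl]
    have hterm : ∀ i : Fin m, |CWAux.Psi u v ((a i)⁻¹ * (b i)⁻¹ * a i * b i)| ≤ 4 * D := by
      intro i
      have heq : (a i)⁻¹ * (b i)⁻¹ * a i * b i = ([(a i)⁻¹, (b i)⁻¹, a i, b i] : List G).prod := by
        simp [mul_assoc]
      have h1 := CWAux.abs_Psi_list_prod u v ([(a i)⁻¹, (b i)⁻¹, a i, b i] : List G)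
      rw [← heq] at h1
      have h2 : (([(a i)⁻¹, (b i)⁻¹, a i, b i] : List G).map (CWAux.Psi u v)).sum = 0 := by
        rw [List.map_cons, List.map_cons, List.map_cons, List.map_cons, List.map_nil,
          List.sum_cons, List.sum_cons, List.sum_cons, List.sum_cons, List.sum_nil,
          CWAux.Psi_inv, CWAux.Psi_inv]
        ring
      rw [h2, sub_zero] at h1
      calc |CWAux.Psi u v ((a i)⁻¹ * (b i)⁻¹ * a i * b i)| ≤ 3 * Fintype.card K * 4 := by
            exact_mod_cast h1
        _ = 4 * D := by rw [hD]; ring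
    have hsum : |(l.map (CWAux.Psi u v)).sum| ≤ 4 * D * m := by
      have : l.map (CWAux.Psi u v)
          = List.ofFn fun i : Fin m => CWAux.Psi u v ((a i)⁻¹ * (b i)⁻¹ * a i * b i) := by
        rw [hl, List.map_ofFn]
        rfl
      rw [this, List.sum_ofFn]
      calc |∑ i : Fin m, CWAux.Psi u v ((a i)⁻¹ * (b i)⁻¹ * a i * b i)|
          ≤ ∑ i : Fin m, |CWAux.Psi u v ((a i)⁻¹ * (b i)⁻¹ * a i * b i)| :=
            Finset.abs_sum_le_sum_abs _ _
        _ ≤ ∑ _i : Fin m, 4 * D := Finset.sum_le_sum fun i _ => hterm i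
        _ = 4 * D * m := by
            rw [Finset.sum_const, Finset.card_univ, Fintype.card_fin, nsmul_eq_mul]
            ring
    have hprod := CWAux.abs_Psi_list_prod u v l
    rw [← hab, hPsig, hlen] at hprod
    have h1 := abs_le.mp hprod
    have h2 := abs_le.mp hsum
    have hNval : (N : ℤ) = 15 * (Fintype.card K : ℤ) * m + 1 := by
      rw [hN]; push_cast; ring
    have hS1 : (N : ℤ) - (l.map (CWAux.Psi u v)).sum ≤ 3 * (Fintype.card K : ℤ) * m := h1.2
    have hS2 : (l.map (CWAux.Psi u v)).sum ≤ 4 * D * m := h2.2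
    rw [hD] at hS2
    linarith
end
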